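/- arXiv:2409.02193 — 7 statements merged into one kernel-verified Lean document; each statement's English description precedes it below -/
import Mathlib

section
/- Let H_X ∈ F₂^{n_X × n}, let q ≥ 2, and let H_R ∈ F₂^{(q−1) × q} be the repetition-code parity check matrix. Identify F₂^{nq} with F₂^n ⊗ F₂^q, with coordinates grouped into n blocks of size q. Let H̃ ∈ F₂^{n_X × nq} be any matrix such that for every row index i and block index j ∈ [n], the restriction of row i of H̃ to block j has exactly one nonzero entry if (H_X)_{ij} = 1 and is the zero vector if (H_X)_{ij} = 0. Then the F₂-span of the rows of H̃ together with the rows of I_n ⊗ H_R equals the F₂-span of the rows of H_X ⊗ ê₁ᵀ together with the rows of I_n ⊗ H_R, where ê₁ = (1,0,…,0) ∈ F₂^q. -/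
open Matrix

/-- Parity check matrix of the `[q,1,q]` repetition code: row `j` is `e_j + e_{j+1}`. -/
def repCheck (q : ℕ) : Matrix (Fin (q - 1)) (Fin q) (ZMod 2) :=
  Matrix.of fun j c => if c.val = j.val ∨ c.val = j.val + 1 then 1 else 0

/-- `I_n ⊗ H_R` acting on `F₂^n ⊗ F₂^q`. -/
def idKronRep (n q : ℕ) : Matrix (Fin n × Fin (q - 1)) (Fin n × Fin q) (ZMod 2) :=
  Matrix.of fun b p => if p.1 = b.1 then repCheck q b.2 p.2 else 0

/-- `H_X ⊗ ê₁ᵀ` where `ê₁ = (1,0,…,0) ∈ F₂^q`. -/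
def kronE1 {nX n : ℕ} (q : ℕ) (HX : Matrix (Fin nX) (Fin n) (ZMod 2)) :
    Matrix (Fin nX) (Fin n × Fin q) (ZMod 2) :=
  Matrix.of fun a p => if p.2.val = 0 then HX a p.1 else 0

/-- auxiliary basis vector -/
def eV {n q : ℕ} (j : Fin n) (c : Fin q) : Fin n × Fin q → ZMod 2 :=
  fun p => if p = (j, c) then 1 else 0

lemma tele {n q : ℕ} (hq : 0 < q) (j : Fin n) (m : ℕ) (hm : m < q) :
    eV j ⟨0, hq⟩ + eV j ⟨m, hm⟩ ∈
      Submodule.span (ZMod 2) (Set.range (fun b => idKronRep n q b)) := by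
  induction m with
  | zero =>
    have : eV j (⟨0, hq⟩ : Fin q) + eV j ⟨0, hm⟩ = 0 := by
      funext p; simp [eV, CharTwo.add_self_eq_zero]
    rw [this]; exact zero_mem _
  | succ m ih =>
    have hm' : m < q := by omega
    have hb : m < q - 1 := by omega
    have hrow : idKronRep n q (j, ⟨m, hb⟩) = eV j ⟨m, hm'⟩ + eV j ⟨m+1, hm⟩ := by
      funext p
      obtain ⟨j', c'⟩ := p
      simp only [idKronRep, repCheck, Matrix.of_apply, eV, Pi.add_apply, Prod.mk.injEq,
        Fin.ext_iff]
      by_cases h1 : j'.val = j.val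
      · by_cases h2 : c'.val = m
        · have h3 : ¬ c'.val = m + 1 := by omega
          simp [h1, h2, h3]
        · by_cases h3 : c'.val = m + 1
          · simp [h1, h2, h3]
          · simp [h1, h2, h3]
      · simp [h1]
    have key : eV j (⟨0, hq⟩ : Fin q) + eV j ⟨m+1, hm⟩ =
        (eV j ⟨0, hq⟩ + eV j ⟨m, hm'⟩) + idKronRep n q (j, ⟨m, hb⟩) := by
      rw [hrow]
      funext p
      simp only [Pi.add_apply]
      have h2 : (2 : ZMod 2) = 0 := rfl
      linear_combination (-(eV j (⟨m, hm'⟩ : Fin q) p)) * h2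
    rw [key]
    exact add_mem (ih hm') (Submodule.subset_span ⟨(j, ⟨m, hb⟩), rfl⟩)

lemma diff_mem {nX n q : ℕ} (hq : 2 ≤ q)
    (HX : Matrix (Fin nX) (Fin n) (ZMod 2))
    (Ht : Matrix (Fin nX) (Fin n × Fin q) (ZMod 2))
    (hone : ∀ i j, HX i j = 1 → ∃! c : Fin q, Ht i (j, c) ≠ 0)
    (hzero : ∀ i j, HX i j = 0 → ∀ c : Fin q, Ht i (j, c) = 0) (i : Fin nX) :
    Ht i + kronE1 q HX i ∈
      Submodule.span (ZMod 2) (Set.range (fun b => idKronRep n q b)) := by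
  have hq0 : 0 < q := by omega
  have hd : Ht i + kronE1 q HX i =
      ∑ j : Fin n, (fun p : Fin n × Fin q =>
        if p.1 = j then Ht i p + kronE1 q HX i p else 0) := by
    funext p
    rw [Finset.sum_apply]
    simp
  rw [hd]
  refine Submodule.sum_mem _ fun j _ => ?_
  rcases (by decide : ∀ x : ZMod 2, x = 0 ∨ x = 1) (HX i j) with h0 | h1
  · have : (fun p : Fin n × Fin q => if p.1 = j then Ht i p + kronE1 q HX i p else 0)
        = (0 : Fin n × Fin q → ZMod 2) := by
      funext p
      obtain ⟨j', c'⟩ := p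
      by_cases h : j' = j
      · subst h
        simp [kronE1, hzero i j' h0, h0]
      · simp [h]
    rw [this]; exact zero_mem _
  · obtain ⟨c, hc, huniq⟩ := hone i j h1
    have hc1 : Ht i (j, c) = 1 := by
      rcases (by decide : ∀ x : ZMod 2, x = 0 ∨ x = 1) (Ht i (j, c)) with h | h
      · exact absurd h hc
      · exact h
    have hval : ∀ c' : Fin q, Ht i (j, c') = if c' = c then 1 else 0 := by
      intro c'
      by_cases h : c' = c
      · simp [h, hc1]
      · simp only [h, if_false]
        by_contra hne
        exact h (huniq c' hne)
    have hfun : (fun p : Fin n × Fin q => if p.1 = j then Ht i p + kronE1 q HX i p else 0)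
        = eV j ⟨0, hq0⟩ + eV j ⟨c.val, c.isLt⟩ := by
      funext p
      obtain ⟨j', c'⟩ := p
      by_cases h : j' = j
      · subst h
        simp only [if_pos rfl, Pi.add_apply, kronE1, Matrix.of_apply, eV, hval c', h1,
          Prod.mk.injEq, true_and]
        rw [add_comm]
        by_cases hcc : c' = c <;> by_cases h0' : c'.val = 0 <;> simp [Fin.ext_iff, hcc, h0']
      · simp [h, eV, Prod.ext_iff]
    rw [hfun]
    have hcv : (⟨c.val, c.isLt⟩ : Fin q) = c := rfl
    exact tele hq0 j c.val c.isLt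

/-- **Equivalence of X stabilizer groups for the copied code.** The rows of any choice
matrix `H̃` together with the rows of `I_n ⊗ H_R` span the same space as the rows of
`H_X ⊗ ê₁ᵀ` together with the rows of `I_n ⊗ H_R`. -/
theorem copied_stabilizer_groups_eq {nX n q : ℕ} (hq : 2 ≤ q)
    (HX : Matrix (Fin nX) (Fin n) (ZMod 2))
    (Ht : Matrix (Fin nX) (Fin n × Fin q) (ZMod 2))
    (hone : ∀ i j, HX i j = 1 → ∃! c : Fin q, Ht i (j, c) ≠ 0)
    (hzero : ∀ i j, HX i j = 0 → ∀ c : Fin q, Ht i (j, c) = 0) :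
    Submodule.span (ZMod 2)
        (Set.range (fun i => Ht i) ∪ Set.range (fun b => idKronRep n q b)) =
      Submodule.span (ZMod 2)
        (Set.range (fun i => kronE1 q HX i) ∪ Set.range (fun b => idKronRep n q b)) := by
  rw [Submodule.span_union, Submodule.span_union]
  have hR : ∀ i : Fin nX, Ht i + kronE1 q HX i ∈
      Submodule.span (ZMod 2) (Set.range (fun b => idKronRep n q b)) :=
    diff_mem hq HX Ht hone hzero
  apply le_antisymm <;> refine sup_le ?_ le_sup_right <;>
    rw [Submodule.span_le] <;> rintro x ⟨i, rfl⟩ <;> refine SetLike.mem_coe.mpr ?_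
  · show Ht i ∈ _
    have heq : Ht i = kronE1 q HX i + (Ht i + kronE1 q HX i) := by
      funext p
      simp only [Pi.add_apply]
      have h2 : (2 : ZMod 2) = 0 := rfl
      linear_combination (-(kronE1 q HX i p)) * h2
    rw [heq]
    exact add_mem (Submodule.mem_sup_left (Submodule.subset_span ⟨i, rfl⟩))
      (Submodule.mem_sup_right (hR i))
  · show kronE1 q HX i ∈ _
    have heq : kronE1 q HX i = Ht i + (Ht i + kronE1 q HX i) := by
      funext p
      simp only [Pi.add_apply]
      have h2 : (2 : ZMod 2) = 0 := rfl
      linear_combination (-(Ht i p)) * h2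
    rw [heq]
    exact add_mem (Submodule.mem_sup_left (Submodule.subset_span ⟨i, rfl⟩))
      (Submodule.mem_sup_right (hR i))
end

section
/- Let H_X ∈ F₂^{n_X × n}, let q ≥ 2, let H_R ∈ F₂^{(q−1) × q} be the repetition-code parity check matrix, and let H̃ ∈ F₂^{n_X × nq} satisfy: for every row index i and block index j ∈ [n], the restriction of row i of H̃ to block j has exactly one nonzero entry if (H_X)_{ij} = 1 and is zero if (H_X)_{ij} = 0. Suppose L = Σ_{i=1}^{F} ê'_i ⊗ v_i + Σ_{j=1}^{T−F} s_j, where each ê'_i ∈ F₂^n and each v_i ∈ F₂^q is a standard basis vector, and each s_j is the row of H̃ with some row index r_j. Define L' = Σ_{i=1}^{F} ê'_i ⊗ ê₁ + Σ_{j=1}^{T−F} s'_j, where ê₁ = (1,0,…,0) ∈ F₂^q and s'_j is row r_j of H_X ⊗ ê₁ᵀ. Then L + L' lies in rowspan(I_n ⊗ H_R); in particular L' is the product of L with X stabilizer generators coming from the rows of I_n ⊗ H_R. -/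
open Matrix

lemma zmod2_cases (x : ZMod 2) : x = 0 ∨ x = 1 := by revert x; decide

lemma zmod2_ne_zero {x : ZMod 2} (h : x ≠ 0) : x = 1 := by revert h; revert x; decide

/-- Any vector whose every block has even weight lies in the row span of `I_n ⊗ H_R`. -/
lemma mem_span_of_blocksum {n q : ℕ} (hq : 2 ≤ q) (w : Fin n × Fin q → ZMod 2)
    (hsum : ∀ j : Fin n, ∑ c : Fin q, w (j, c) = 0) :
    w ∈ Submodule.span (ZMod 2) (Set.range fun b => idKronRep n q b) := by
  set P : Fin n → ℕ → ZMod 2 :=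
    fun j m => ∑ i : Fin q, if i.val ≤ m then w (j, i) else 0 with hPdef
  have hPtop : ∀ j m, q - 1 ≤ m → P j m = 0 := by
    intro j m hm
    rw [hPdef]
    simp only
    rw [← hsum j]
    refine Finset.sum_congr rfl fun i _ => ?_
    rw [if_pos (by omega)]
  have hP0 : ∀ j, P j 0 = w (j, ⟨0, by omega⟩) := by
    intro j
    rw [hPdef]
    simp only
    rw [Finset.sum_eq_single (⟨0, by omega⟩ : Fin q)]
    · simp
    · intro i _ hi
      rw [if_neg (fun h => hi (Fin.ext (show i.val = 0 by omega)))]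
    · simp
  have hstep : ∀ j m (hm1 : 1 ≤ m) (hm2 : m ≤ q - 1),
      P j m + P j (m - 1) = w (j, ⟨m, by omega⟩) := by
    intro j m hm1 hm2
    rw [hPdef]
    simp only
    rw [← Finset.sum_add_distrib]
    have : ∀ i : Fin q,
        ((if i.val ≤ m then w (j, i) else 0) + (if i.val ≤ m - 1 then w (j, i) else 0))
        = (if i.val = m then w (j, i) else 0) := by
      intro i
      split_ifs with h1 h2 h3 h4 <;> first
        | omega
        | exact CharTwo.add_self_eq_zero _
        | rw [add_zero]
        | rw [zero_add]
    rw [Finset.sum_congr rfl fun i _ => this i]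
    rw [Finset.sum_eq_single (⟨m, by omega⟩ : Fin q)]
    · simp
    · intro i _ hi
      rw [if_neg (fun h => hi (Fin.ext (by simpa using h)))]
    · simp
  have hw : w = ∑ b : Fin n × Fin (q - 1), P b.1 b.2.val • idKronRep n q b := by
    funext p
    obtain ⟨j, c⟩ := p
    rw [Finset.sum_apply]
    simp only [Pi.smul_apply, smul_eq_mul, idKronRep, Matrix.of_apply]
    rw [Fintype.sum_prod_type]
    rw [Finset.sum_eq_single j]
    · have hsplit : ∀ b2 : Fin (q - 1),
          P j b2.val * (if (j, c).1 = j then repCheck q b2 (j, c).2 else 0)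
          = (if c.val = b2.val then P j b2.val else 0)
            + (if c.val = b2.val + 1 then P j b2.val else 0) := by
        intro b2
        rw [if_pos rfl]
        simp only [repCheck, Matrix.of_apply]
        split_ifs with h h1 h2 h3 h4 h5 <;> first | omega | ring
      rw [Finset.sum_congr rfl fun b2 _ => hsplit b2, Finset.sum_add_distrib]
      have hfirst : (∑ b2 : Fin (q - 1), if c.val = b2.val then P j b2.val else 0)
          = P j c.val := by
        by_cases hc : c.val < q - 1
        · rw [Finset.sum_eq_single (⟨c.val, hc⟩ : Fin (q - 1))]
          · simp
          · intro b2 _ hb2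
            rw [if_neg (fun h => hb2 (Fin.ext (show b2.val = c.val by omega)))]
          · simp
        · have hc' : c.val = q - 1 := by omega
          rw [Finset.sum_eq_zero, hPtop j c.val (by omega)]
          intro b2 _
          rw [if_neg (by omega)]
      have hsecond : (∑ b2 : Fin (q - 1), if c.val = b2.val + 1 then P j b2.val else 0)
          = if 1 ≤ c.val then P j (c.val - 1) else 0 := by
        by_cases hc : 1 ≤ c.val
        · rw [if_pos hc]
          rw [Finset.sum_eq_single (⟨c.val - 1, by omega⟩ : Fin (q - 1))]
          · rw [if_pos (show c.val = c.val - 1 + 1 by omega)]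
          · intro b2 _ hb2
            rw [if_neg (fun h => hb2 (Fin.ext (show b2.val = c.val - 1 by omega)))]
          · intro h
            exact absurd (Finset.mem_univ _) h
        · rw [if_neg hc, Finset.sum_eq_zero]
          intro b2 _
          rw [if_neg (by omega)]
      rw [hfirst, hsecond]
      by_cases hc : 1 ≤ c.val
      · rw [if_pos hc, hstep j c.val hc (by omega)]
      · have hc0 : c.val = 0 := by omega
        have hceq : c = ⟨0, by omega⟩ := Fin.ext hc0
        rw [if_neg hc, add_zero, hc0, hP0 j, hceq]
    · intro b1 _ hb1
      rw [Finset.sum_eq_zero]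
      intro b2 _
      rw [if_neg (by simpa using hb1.symm), mul_zero]
    · intro h
      exact absurd (Finset.mem_univ _) h
  rw [hw]
  exact Submodule.sum_mem _ fun b _ =>
    Submodule.smul_mem _ _ (Submodule.subset_span ⟨b, rfl⟩)

/-- **Elementary faults for X logical operators.** If `L` is a sum of `F` single-qubit
errors and `T - F` rows of `H̃`, and `L'` is the corresponding sum with every copy index
replaced by the first copy, then `L + L'` lies in the row span of `I_n ⊗ H_R`. -/
theorem copied_logical_cleanup {nX n q : ℕ} (hq : 2 ≤ q)
    (HX : Matrix (Fin nX) (Fin n) (ZMod 2))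
    (Ht : Matrix (Fin nX) (Fin n × Fin q) (ZMod 2))
    (hone : ∀ i j, HX i j = 1 → ∃! c : Fin q, Ht i (j, c) ≠ 0)
    (hzero : ∀ i j, HX i j = 0 → ∀ c : Fin q, Ht i (j, c) = 0)
    (F T : ℕ) (hFT : F ≤ T)
    (idx : Fin F → Fin n) (cpy : Fin F → Fin q) (rs : Fin (T - F) → Fin nX)
    (L L' : Fin n × Fin q → ZMod 2)
    (hL : L =
        (∑ i : Fin F, fun p : Fin n × Fin q =>
          if p.1 = idx i ∧ p.2 = cpy i then (1 : ZMod 2) else 0)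
        + ∑ j : Fin (T - F), Ht (rs j))
    (hL' : L' =
        (∑ i : Fin F, fun p : Fin n × Fin q =>
          if p.1 = idx i ∧ p.2.val = 0 then (1 : ZMod 2) else 0)
        + ∑ j : Fin (T - F), kronE1 q HX (rs j)) :
    L + L' ∈ Submodule.span (ZMod 2) (Set.range fun b => idKronRep n q b) := by
  have htSum : ∀ (r : Fin nX) (j : Fin n), ∑ c : Fin q, Ht r (j, c) = HX r j := by
    intro r j
    rcases zmod2_cases (HX r j) with h | h
    · rw [h, Finset.sum_eq_zero]
      intro c _
      exact hzero r j h c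
    · obtain ⟨c0, hc0, huniq⟩ := hone r j h
      rw [h, Finset.sum_eq_single c0]
      · exact zmod2_ne_zero hc0
      · intro c _ hc
        by_contra hne
        exact hc (huniq c hne)
      · simp
  have hkSum : ∀ (r : Fin nX) (j : Fin n), ∑ c : Fin q, kronE1 q HX r (j, c) = HX r j := by
    intro r j
    rw [Finset.sum_eq_single (⟨0, by omega⟩ : Fin q)]
    · simp [kronE1]
    · intro c _ hc
      simp only [kronE1, Matrix.of_apply]
      rw [if_neg (fun h => hc (Fin.ext (by simpa using h)))]
    · simp
  apply mem_span_of_blocksum hq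
  intro j
  have expand : ∀ c : Fin q, (L + L') (j, c) =
      ((∑ i : Fin F, if j = idx i ∧ c = cpy i then (1 : ZMod 2) else 0)
        + ∑ r : Fin (T - F), Ht (rs r) (j, c))
      + ((∑ i : Fin F, if j = idx i ∧ c.val = 0 then (1 : ZMod 2) else 0)
        + ∑ r : Fin (T - F), kronE1 q HX (rs r) (j, c)) := by
    intro c
    rw [Pi.add_apply, hL, hL']
    simp [Finset.sum_apply]
  rw [Finset.sum_congr rfl fun c _ => expand c]
  simp only [Finset.sum_add_distrib]
  have e1 : (∑ c : Fin q, ∑ i : Fin F, if j = idx i ∧ c = cpy i then (1 : ZMod 2) else 0)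
      = ∑ i : Fin F, ∑ c : Fin q, if j = idx i ∧ c = cpy i then (1 : ZMod 2) else 0 :=
    Finset.sum_comm
  have e2 : (∑ c : Fin q, ∑ r : Fin (T - F), Ht (rs r) (j, c))
      = ∑ r : Fin (T - F), ∑ c : Fin q, Ht (rs r) (j, c) := Finset.sum_comm
  have e3 : (∑ c : Fin q, ∑ i : Fin F, if j = idx i ∧ c.val = 0 then (1 : ZMod 2) else 0)
      = ∑ i : Fin F, ∑ c : Fin q, if j = idx i ∧ c.val = 0 then (1 : ZMod 2) else 0 :=
    Finset.sum_comm
  have e4 : (∑ c : Fin q, ∑ r : Fin (T - F), kronE1 q HX (rs r) (j, c))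
      = ∑ r : Fin (T - F), ∑ c : Fin q, kronE1 q HX (rs r) (j, c) := Finset.sum_comm
  rw [e1, e2, e3, e4]
  have h1 : ∀ i : Fin F, (∑ c : Fin q, if j = idx i ∧ c = cpy i then (1 : ZMod 2) else 0)
      = if j = idx i then 1 else 0 := by
    intro i
    by_cases hji : j = idx i
    · simp [hji]
    · simp [hji]
  have h2 : ∀ i : Fin F, (∑ c : Fin q, if j = idx i ∧ c.val = 0 then (1 : ZMod 2) else 0)
      = if j = idx i then 1 else 0 := by
    intro i
    by_cases hji : j = idx i
    · simp only [hji, true_and]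
      rw [Finset.sum_eq_single (⟨0, by omega⟩ : Fin q)]
      · simp
      · intro c _ hc
        rw [if_neg (fun h => hc (Fin.ext (by simpa using h)))]
      · simp
    · simp [hji]
  rw [Finset.sum_congr rfl fun i _ => h1 i, Finset.sum_congr rfl fun i _ => h2 i,
    Finset.sum_congr rfl fun r _ => htSum (rs r) j,
    Finset.sum_congr rfl fun r _ => hkSum (rs r) j]
  exact CharTwo.add_self_eq_zero _
end

section
/- Let (H_X, H_Z) be a CSS code and q ≥ 2, and let H'_X and H'_Z be the check matrices of the copied code. Then H'_X · (H'_Z)ᵀ = 0, and the number of logical qubits is preserved: dim_{F₂}( ker(H'_X) / rowspan(H'_Z) ) = dim_{F₂}( ker(H_X) / rowspan(H_Z) ). -/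
open Matrix

/-- The `F₂`-span of the rows of a matrix. -/
noncomputable def rowSpan {ι κ : Type*} [Fintype ι] [Fintype κ] (M : Matrix ι κ (ZMod 2)) :
    Submodule (ZMod 2) (κ → ZMod 2) :=
  Submodule.span (ZMod 2) (Set.range fun i => M i)

/-- The kernel `{v : M v = 0}` of a matrix, as a submodule. -/
noncomputable def kerMat {ι κ : Type*} [Fintype ι] [Fintype κ] (M : Matrix ι κ (ZMod 2)) :
    Submodule (ZMod 2) (κ → ZMod 2) :=
  LinearMap.ker M.mulVecLin

/-- Number of logical qubits of a CSS code: `dim (ker H_X / rowspan H_Z)`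
(the quotient of the kernel by the intersection of the row span with the kernel,
which agrees with `ker/rowspan` when `rowspan ⊆ ker`). -/
noncomputable def logicalDim {ι₁ ι₂ κ : Type*} [Fintype ι₁] [Fintype ι₂] [Fintype κ]
    (HX : Matrix ι₁ κ (ZMod 2)) (HZ : Matrix ι₂ κ (ZMod 2)) : ℕ :=
  Module.finrank (ZMod 2) (↥(kerMat HX) ⧸ (rowSpan HZ).comap (kerMat HX).subtype)

/-- X check matrix of the copied code: `H_X ⊗ ê₁ᵀ` stacked on top of `I_n ⊗ H_R`. -/
def copyX {nX n : ℕ} (q : ℕ) (HX : Matrix (Fin nX) (Fin n) (ZMod 2)) :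
    Matrix (Fin nX ⊕ (Fin n × Fin (q - 1))) (Fin n × Fin q) (ZMod 2) :=
  Matrix.of fun s p =>
    match s with
    | Sum.inl a => kronE1 q HX a p
    | Sum.inr b => idKronRep n q b p

/-- Z check matrix of the copied code: `H_Z ⊗ 1_qᵀ`. -/
def copyZ {nZ n : ℕ} (q : ℕ) (HZ : Matrix (Fin nZ) (Fin n) (ZMod 2)) :
    Matrix (Fin nZ) (Fin n × Fin q) (ZMod 2) :=
  Matrix.of fun s p => HZ s p.1

/-!
The map `v ↦ v ⊗ 1_q` is injective and identifies `ker H_X` with `ker H'_X`: the repetition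
checks `I_n ⊗ H_R` force a kernel vector to be constant across the copies, and `H_X ⊗ ê₁ᵀ` then
says that its common slice lies in `ker H_X`. The same map sends `rowspan H_Z` onto
`rowspan H'_Z`, so it induces an isomorphism of the quotients, and `rowspan H_Z ⊆ ker H_X`
transports to the CSS condition of the copied code.
-/

theorem Submodule.finrank_quotient_comap_subtype_map_of_injective {R V W : Type*} [Ring R]
    [AddCommGroup V] [Module R V] [AddCommGroup W] [Module R W] {φ : V →ₗ[R] W}
    (hφ : Function.Injective φ) (A B : Submodule R V) :
    Module.finrank R (A.map φ ⧸ (B.map φ).comap (A.map φ).subtype) =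
      Module.finrank R (A ⧸ B.comap A.subtype) := by
  refine (Submodule.Quotient.equiv _ _ (A.equivMapOfInjective φ hφ) ?_).finrank_eq.symm
  ext ⟨w, hw⟩
  constructor
  · rintro ⟨a, haB, hw'⟩
    exact ⟨a, haB, congrArg Subtype.val hw'⟩
  · rintro ⟨b, hbB, rfl⟩
    obtain ⟨a, ha, hab⟩ := hw
    obtain rfl := hφ hab
    exact ⟨⟨a, ha⟩, hbB, rfl⟩

theorem mul_transpose_eq_zero_iff_rowSpan_le_kerMat {ι₁ ι₂ κ : Type*} [Fintype ι₁] [Fintype ι₂]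
    [Fintype κ] (A : Matrix ι₁ κ (ZMod 2)) (B : Matrix ι₂ κ (ZMod 2)) :
    A * Bᵀ = 0 ↔ rowSpan B ≤ kerMat A := by
  have hentry : ∀ s i, (A * Bᵀ) s i = (A *ᵥ B i) s := fun _ _ => rfl
  simp only [rowSpan, kerMat, Submodule.span_le, Set.range_subset_iff, SetLike.mem_coe,
    LinearMap.mem_ker, mulVecLin_apply, ← Matrix.ext_iff, funext_iff, hentry, Matrix.zero_apply,
    Pi.zero_apply]
  exact forall_comm

theorem rowSpan_copyZ {nZ n : ℕ} (q : ℕ) (HZ : Matrix (Fin nZ) (Fin n) (ZMod 2)) :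
    rowSpan (copyZ q HZ) = (rowSpan HZ).map (LinearMap.funLeft (ZMod 2) (ZMod 2) Prod.fst) := by
  rw [rowSpan, rowSpan, Submodule.map_span, ← Set.range_comp]
  rfl

theorem mulVec_repCheck_apply {q : ℕ} (f : Fin q → ZMod 2) (j : Fin (q - 1)) :
    (repCheck q *ᵥ f) j = f ⟨j, by omega⟩ + f ⟨j + 1, by omega⟩ := by
  have hterm : ∀ c, repCheck q j c * f c =
      (if c = ⟨j, by omega⟩ then f c else 0) + (if c = ⟨j + 1, by omega⟩ then f c else 0) := by
    intro c
    simp only [repCheck, of_apply, Fin.ext_iff]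
    split_ifs <;> simp_all
  simp only [mulVec, dotProduct, hterm, Finset.sum_add_distrib, Finset.sum_ite_eq',
    Finset.mem_univ, if_true]

theorem mulVec_repCheck_eq_zero_iff {q : ℕ} (f : Fin q → ZMod 2) :
    repCheck q *ᵥ f = 0 ↔ ∀ c c', f c = f c' := by
  simp only [funext_iff, mulVec_repCheck_apply, Pi.zero_apply, CharTwo.add_eq_zero]
  refine ⟨fun hstep => ?_, fun hconst _ => hconst _ _⟩
  have hfirst : ∀ (m : ℕ) (hm : m < q), f ⟨m, hm⟩ = f ⟨0, by omega⟩ := by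
    intro m hm
    induction m with
    | zero => rfl
    | succ m ih => rw [← hstep ⟨m, by omega⟩, ih]
  intro c c'
  rw [hfirst c c.isLt, hfirst c' c'.isLt]

theorem idKronRep_mulVec_apply (n q : ℕ) (w : Fin n × Fin q → ZMod 2) (i : Fin n)
    (j : Fin (q - 1)) : (idKronRep n q *ᵥ w) (i, j) = (repCheck q *ᵥ fun c => w (i, c)) j := by
  simp [mulVec, dotProduct, idKronRep, Fintype.sum_prod_type, ite_mul]

theorem idKronRep_mulVec_eq_zero_iff (n q : ℕ) (w : Fin n × Fin q → ZMod 2) :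
    idKronRep n q *ᵥ w = 0 ↔ ∀ i c c', w (i, c) = w (i, c') := by
  simp only [funext_iff, Prod.forall, idKronRep_mulVec_apply, Pi.zero_apply,
    ← mulVec_repCheck_eq_zero_iff]

theorem kronE1_mulVec {nX n q : ℕ} (hq : 0 < q) (HX : Matrix (Fin nX) (Fin n) (ZMod 2))
    (w : Fin n × Fin q → ZMod 2) : kronE1 q HX *ᵥ w = HX *ᵥ fun i => w (i, ⟨0, hq⟩) := by
  have hzero : ∀ c : Fin q, (c : ℕ) = 0 ↔ c = ⟨0, hq⟩ := fun c => by
    rw [Fin.ext_iff]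
  ext a
  simp [mulVec, dotProduct, kronE1, Fintype.sum_prod_type, ite_mul, hzero]

theorem copyX_eq_fromRows {nX n : ℕ} (q : ℕ) (HX : Matrix (Fin nX) (Fin n) (ZMod 2)) :
    copyX q HX = fromRows (kronE1 q HX) (idKronRep n q) := by
  ext (a | b) p <;> rfl

theorem kerMat_copyX {nX n q : ℕ} (hq : 0 < q) (HX : Matrix (Fin nX) (Fin n) (ZMod 2)) :
    kerMat (copyX q HX) = (kerMat HX).map (LinearMap.funLeft (ZMod 2) (ZMod 2) Prod.fst) := by
  ext w
  simp only [kerMat, LinearMap.mem_ker, mulVecLin_apply, Submodule.mem_map, copyX_eq_fromRows,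
    fromRows_mulVec, ← Sum.elim_zero_zero, Sum.elim_eq_iff, kronE1_mulVec hq,
    idKronRep_mulVec_eq_zero_iff]
  constructor
  · rintro ⟨hX, hconst⟩
    exact ⟨_, hX, funext fun p => hconst p.1 _ _⟩
  · rintro ⟨v, hv, rfl⟩
    exact ⟨hv, fun _ _ _ => rfl⟩

/-- **Copying is a CSS code and preserves the number of logical qubits.** -/
theorem copying_preserves_logical_qubits {nX nZ n q : ℕ} (hq : 2 ≤ q)
    (HX : Matrix (Fin nX) (Fin n) (ZMod 2)) (HZ : Matrix (Fin nZ) (Fin n) (ZMod 2))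
    (hcss : HX * HZ.transpose = 0) :
    copyX q HX * (copyZ q HZ).transpose = 0 ∧
      logicalDim (copyX q HX) (copyZ q HZ) = logicalDim HX HZ := by
  have hq0 : 0 < q := by omega
  have : Nonempty (Fin q) := ⟨⟨0, hq0⟩⟩
  have hψ := LinearMap.funLeft_injective_of_surjective (ZMod 2) (ZMod 2) _
    (Prod.fst_surjective (α := Fin n) (β := Fin q))
  have hker := kerMat_copyX hq0 HX
  refine ⟨?_, ?_⟩
  · rw [mul_transpose_eq_zero_iff_rowSpan_le_kerMat, hker, rowSpan_copyZ]
    exact Submodule.map_mono ((mul_transpose_eq_zero_iff_rowSpan_le_kerMat HX HZ).1 hcss)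
  · rw [logicalDim, logicalDim, hker, rowSpan_copyZ]
    exact Submodule.finrank_quotient_comap_subtype_map_of_injective hψ _ _
end

section
/- Let (H_X, H_Z) be a CSS code that has at least one X logical operator, with X distance d_X, and let q ≥ 2. Let H'_X, H'_Z be the check matrices of the copied code. Then the copied code has at least one X logical operator, and its X distance equals d_X: the minimum Hamming weight over ker(H'_Z) \ rowspan(H'_X) equals the minimum Hamming weight over ker(H_Z) \ rowspan(H_X). -/
/-!
Let `π : F₂^{n×q} → F₂^n` add up the `q` copies, `π(V)_i = ∑_j V(i,j)`. Then `H'_Z V = H_Z π(V)`,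
and `π` identifies the two row spaces: the rows of `I_n ⊗ H_R` span exactly `ker π` (every block
of `q` coordinates has even weight), and `x ↦ x ⊗ ê₁`, which maps the rows of `H_X` to those of
`H_X ⊗ ê₁ᵀ`, is a section of `π`; hence `V ∈ rowspan(H'_X) ↔ π(V) ∈ rowspan(H_X)`. So `V` is an
X logical operator of the copied code iff `π(V)` is one of the original code. As `π` does not
increase weight and `x ↦ x ⊗ ê₁` preserves it, the two minimum weights coincide.
-/

open Matrix

/-- The logical operators `ker(Hker) \ rowspan(Hspan)`. -/
def logicalSet {ι₁ ι₂ κ : Type*} [Fintype ι₁] [Fintype ι₂] [Fintype κ]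
    (Hker : Matrix ι₁ κ (ZMod 2)) (Hspan : Matrix ι₂ κ (ZMod 2)) : Set (κ → ZMod 2) :=
  {v | Hker.mulVec v = 0 ∧ v ∉ rowSpan Hspan}

/-- Minimum Hamming weight over a set of vectors. -/
noncomputable def minWt {ι : Type*} [Fintype ι] (S : Set (ι → ZMod 2)) : ℕ :=
  sInf (hammingNorm '' S)

section Copies

variable {R ι κ : Type*} [CommRing R]

def copyAt [DecidableEq κ] (k : κ) : (ι → R) →ₗ[R] (ι × κ → R) where
  toFun x p := if p.2 = k then x p.1 else 0
  map_add' x y := by ext p; split_ifs <;> simp [*]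
  map_smul' r x := by ext p; split_ifs <;> simp [*]

@[simp]
lemma copyAt_apply [DecidableEq κ] (k : κ) (x : ι → R) (p : ι × κ) :
    copyAt k x p = if p.2 = k then x p.1 else 0 := rfl

variable [Fintype κ]

def sumCopies : (ι × κ → R) →ₗ[R] (ι → R) where
  toFun V i := ∑ j, V (i, j)
  map_add' V W := by ext i; simp [Finset.sum_add_distrib]
  map_smul' r V := by ext i; simp [Finset.mul_sum]

@[simp]
lemma sumCopies_apply (V : ι × κ → R) (i : ι) : sumCopies V i = ∑ j, V (i, j) := rfl

variable [DecidableEq κ]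

@[simp]
lemma sumCopies_copyAt (k : κ) (x : ι → R) : sumCopies (copyAt k x) = x := by
  ext i; simp

lemma sumCopies_comp_copyAt (k : κ) : sumCopies ∘ₗ copyAt k = (LinearMap.id : (ι → R) →ₗ[R] _) :=
  LinearMap.ext fun x => sumCopies_copyAt k x

variable [DecidableEq ι]

lemma sumCopies_single (p : ι × κ) (r : R) : sumCopies (Pi.single p r) = Pi.single p.1 r := by
  ext i
  simp only [sumCopies_apply, Pi.single_apply, Prod.ext_iff]
  by_cases h : i = p.1 <;> simp [h]

lemma ker_sumCopies_le {P : Submodule R (ι × κ → R)} [Fintype ι] (k : κ)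
    (hP : ∀ i j, Pi.single (i, j) 1 - Pi.single (i, k) 1 ∈ P) : LinearMap.ker sumCopies ≤ P := by
  intro V hV
  have hbase : ∑ p : ι × κ, V p • (Pi.single (p.1, k) 1 : ι × κ → R) = 0 := by
    rw [Fintype.sum_prod_type]
    simp_rw [← Finset.sum_smul]
    simp [show ∀ i, ∑ j, V (i, j) = 0 from congr_fun hV]
  have hdecomp : ∑ p, V p • (Pi.single p 1 - Pi.single (p.1, k) 1) = V := by
    simp_rw [smul_sub, Finset.sum_sub_distrib, hbase, sub_zero, ← Pi.single_smul, smul_eq_mul,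
      mul_one, Finset.univ_sum_single]
  rw [← hdecomp]
  exact P.sum_mem fun p _ => P.smul_mem _ (hP p.1 p.2)

end Copies

section Weight

variable {α ι κ : Type*} [CommRing α] [DecidableEq α] [Fintype ι] [Fintype κ]

lemma hammingNorm_copyAt [DecidableEq κ] (k : κ) (x : ι → α) :
    hammingNorm (copyAt k x) = hammingNorm x := by
  classical
  have hsupp : Finset.univ.filter (fun p => copyAt k x p ≠ 0) =
      (Finset.univ.filter fun i => x i ≠ 0).map (Function.Embedding.sectL ι k) := by
    ext ⟨i, j⟩
    by_cases hj : j = k <;> simp [hj, Ne.symm]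
  simp only [hammingNorm, hsupp, Finset.card_map]

lemma hammingNorm_sumCopies_le (V : ι × κ → α) :
    hammingNorm (sumCopies V) ≤ hammingNorm V := by
  classical
  calc hammingNorm (sumCopies V)
      ≤ ((Finset.univ.filter fun p => V p ≠ 0).image Prod.fst).card := by
        refine Finset.card_le_card fun i hi => ?_
        obtain ⟨j, -, hj⟩ := Finset.exists_ne_zero_of_sum_ne_zero (Finset.mem_filter.1 hi).2
        exact Finset.mem_image.2 ⟨(i, j), by simpa using hj, rfl⟩
    _ ≤ hammingNorm V := Finset.card_image_le

end Weight

lemma Submodule.comap_eq_map_sup_ker {R M N : Type*} [Ring R] [AddCommGroup M] [Module R M]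
    [AddCommGroup N] [Module R N] {p : M →ₗ[R] N} {s : N →ₗ[R] M} (h : p ∘ₗ s = LinearMap.id)
    (S : Submodule R N) : S.comap p = S.map s ⊔ LinearMap.ker p := by
  rw [← Submodule.comap_map_eq, ← Submodule.map_comp, h, Submodule.map_id]

lemma minWt_le_of_mapsTo {ι ι' : Type*} [Fintype ι] [Fintype ι'] {S : Set (ι → ZMod 2)}
    {T : Set (ι' → ZMod 2)} {f : (ι → ZMod 2) → ι' → ZMod 2} (hS : S.Nonempty)
    (hf : Set.MapsTo f S T) (hwt : ∀ x ∈ S, hammingNorm (f x) ≤ hammingNorm x) :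
    minWt T ≤ minWt S := by
  obtain ⟨x, hx, hmin⟩ := Nat.sInf_mem (hS.image hammingNorm)
  calc minWt T ≤ hammingNorm (f x) := Nat.sInf_le ⟨f x, hf hx, rfl⟩
    _ ≤ hammingNorm x := hwt x hx
    _ = minWt S := hmin

section CopiedCode

variable {nX nZ n q : ℕ}

lemma idKronRep_row (b : Fin n × Fin (q - 1)) :
    idKronRep n q b =
      Pi.single (b.1, ⟨b.2, by omega⟩) 1 + Pi.single (b.1, ⟨b.2 + 1, by omega⟩) 1 := by
  ext ⟨i, c⟩
  by_cases hi : i = b.1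
  · by_cases hc : c.val = b.2.val <;>
      simp [idKronRep, repCheck, Pi.single_apply, Prod.ext_iff, Fin.ext_iff, hi, hc]
  · simp [idKronRep, Prod.ext_iff, hi]

lemma single_add_single_zero_mem_rowSpan_idKronRep (i : Fin n) :
    ∀ (j : ℕ) (hj : j < q),
      Pi.single (i, ⟨j, hj⟩) 1 + Pi.single (i, ⟨0, by omega⟩) 1 ∈ rowSpan (idKronRep n q)
  | 0, _ => by simp [ZModModule.add_self]
  | j + 1, hj => by
    have hrow : idKronRep n q (i, ⟨j, by omega⟩) ∈ rowSpan (idKronRep n q) :=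
      Submodule.subset_span ⟨_, rfl⟩
    rw [idKronRep_row] at hrow
    convert add_mem hrow (single_add_single_zero_mem_rowSpan_idKronRep i j (by omega)) using 1
    rw [add_add_add_comm, ZModModule.add_self, zero_add]

lemma rowSpan_idKronRep (hq : 0 < q) :
    rowSpan (idKronRep n q) = LinearMap.ker sumCopies := by
  refine le_antisymm (Submodule.span_le.2 ?_) (ker_sumCopies_le ⟨0, hq⟩ fun i j => ?_)
  · rintro _ ⟨b, rfl⟩
    simp [idKronRep_row, sumCopies_single, ZModModule.add_self]
  · rw [ZModModule.sub_eq_add]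
    exact single_add_single_zero_mem_rowSpan_idKronRep i j j.isLt

lemma copyX_eq_elim (hq : 0 < q) (HX : Matrix (Fin nX) (Fin n) (ZMod 2)) :
    (fun s => copyX q HX s) =
      Sum.elim (fun a => copyAt ⟨0, hq⟩ (HX a)) (fun b => idKronRep n q b) := by
  ext (a | b) ⟨i, c⟩ <;> simp [copyX, kronE1, Fin.ext_iff]

lemma rowSpan_copyX (hq : 0 < q) (HX : Matrix (Fin nX) (Fin n) (ZMod 2)) :
    rowSpan (copyX q HX) = (rowSpan HX).comap sumCopies := by
  have hsplit : rowSpan (copyX q HX) =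
      (rowSpan HX).map (copyAt ⟨0, hq⟩) ⊔ rowSpan (idKronRep n q) := by
    simp only [rowSpan, copyX_eq_elim hq, Set.Sum.elim_range, Submodule.span_union,
      Submodule.map_span, ← Set.range_comp]
    rfl
  rw [hsplit, rowSpan_idKronRep hq, Submodule.comap_eq_map_sup_ker (sumCopies_comp_copyAt _)]

lemma copyZ_mulVec (HZ : Matrix (Fin nZ) (Fin n) (ZMod 2)) (V : Fin n × Fin q → ZMod 2) :
    copyZ q HZ *ᵥ V = HZ *ᵥ sumCopies V := by
  ext s
  simp [copyZ, Matrix.mulVec, dotProduct, Fintype.sum_prod_type, Finset.mul_sum]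

lemma mem_logicalSet_copy_iff (hq : 0 < q) (HX : Matrix (Fin nX) (Fin n) (ZMod 2))
    (HZ : Matrix (Fin nZ) (Fin n) (ZMod 2)) (V : Fin n × Fin q → ZMod 2) :
    V ∈ logicalSet (copyZ q HZ) (copyX q HX) ↔ sumCopies V ∈ logicalSet HZ HX := by
  simp only [logicalSet, Set.mem_ofPred_eq, copyZ_mulVec, rowSpan_copyX hq, Submodule.mem_comap]

end CopiedCode

theorem copying_X_distance_general {nX nZ n q : ℕ} (hq : 2 ≤ q)
    (HX : Matrix (Fin nX) (Fin n) (ZMod 2)) (HZ : Matrix (Fin nZ) (Fin n) (ZMod 2))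
    (hlog : (logicalSet HZ HX).Nonempty) :
    (logicalSet (copyZ q HZ) (copyX q HX)).Nonempty ∧
      minWt (logicalSet (copyZ q HZ) (copyX q HX)) = minWt (logicalSet HZ HX) := by
  have hq0 : 0 < q := by omega
  have hcopy : Set.MapsTo (copyAt ⟨0, hq0⟩) (logicalSet HZ HX)
      (logicalSet (copyZ q HZ) (copyX q HX)) := fun v hv => by
    rwa [mem_logicalSet_copy_iff hq0, sumCopies_copyAt]
  have hsum : Set.MapsTo sumCopies (logicalSet (copyZ q HZ) (copyX q HX))
      (logicalSet HZ HX) := fun V hV => (mem_logicalSet_copy_iff hq0 HX HZ V).1 hV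
  have hlog' : (logicalSet (copyZ q HZ) (copyX q HX)).Nonempty :=
    (hlog.image _).mono (Set.image_subset_iff.2 hcopy)
  refine ⟨hlog', le_antisymm ?_ ?_⟩
  · exact minWt_le_of_mapsTo hlog hcopy fun v _ => (hammingNorm_copyAt _ v).le
  · exact minWt_le_of_mapsTo hlog' hsum fun V _ => hammingNorm_sumCopies_le V

/-- **Copying preserves the X distance.** -/
theorem copying_X_distance {nX nZ n q : ℕ} (hq : 2 ≤ q)
    (HX : Matrix (Fin nX) (Fin n) (ZMod 2)) (HZ : Matrix (Fin nZ) (Fin n) (ZMod 2))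
    (hcss : HX * HZ.transpose = 0)
    (hlog : (logicalSet HZ HX).Nonempty) :
    (logicalSet (copyZ q HZ) (copyX q HX)).Nonempty ∧
      minWt (logicalSet (copyZ q HZ) (copyX q HX)) = minWt (logicalSet HZ HX) :=
  copying_X_distance_general hq HX HZ hlog
end

section
/- Let (H_X, H_Z) be a CSS code with k logical qubits and let H_C ∈ F₂^{(n_c−k_c) × n_c} be a classical parity check matrix of full row rank n_c − k_c (so that dim ker(H_C) = k_c). Let H'_X and H'_Z be the check matrices of the generalized thickened code. Then H'_X · (H'_Z)ᵀ = 0, and the thickened code has k·k_c logical qubits: dim_{F₂}( ker(H'_X) / rowspan(H'_Z) ) = k · k_c. -/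
open Matrix

/-- X check matrix of the generalized thickened code: `( H_X ⊗ I_{n_c} | I_{n_X} ⊗ H_Cᵀ )`.
Region A qubits are indexed by `Fin n × Fin nc`, region B qubits by `Fin nX × Fin r`. -/
def thickX {nX n r nc : ℕ} (HX : Matrix (Fin nX) (Fin n) (ZMod 2))
    (HC : Matrix (Fin r) (Fin nc) (ZMod 2)) :
    Matrix (Fin nX × Fin nc) ((Fin n × Fin nc) ⊕ (Fin nX × Fin r)) (ZMod 2) :=
  Matrix.of fun s p =>
    match p with
    | Sum.inl (i, c) => if c = s.2 then HX s.1 i else 0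
    | Sum.inr (x, j) => if x = s.1 then HC j s.2 else 0

/-- Z check matrix of the generalized thickened code:
first block row `( H_Z ⊗ I_{n_c} | 0 )`,
second block row `( I_n ⊗ H_C | H_Xᵀ ⊗ I_{n_c-k_c} )`. -/
def thickZ {nX nZ n r nc : ℕ} (HX : Matrix (Fin nX) (Fin n) (ZMod 2))
    (HZ : Matrix (Fin nZ) (Fin n) (ZMod 2)) (HC : Matrix (Fin r) (Fin nc) (ZMod 2)) :
    Matrix ((Fin nZ × Fin nc) ⊕ (Fin n × Fin r)) ((Fin n × Fin nc) ⊕ (Fin nX × Fin r)) (ZMod 2) :=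
  Matrix.of fun s p =>
    match s, p with
    | Sum.inl (z, c), Sum.inl (i, c') => if c' = c then HZ z i else 0
    | Sum.inl _, Sum.inr _ => 0
    | Sum.inr (i, j), Sum.inl (i', c) => if i' = i then HC j c else 0
    | Sum.inr (i, j), Sum.inr (x, j') => if j' = j then HX x i else 0

/-!
For a CSS code `k = n - rank H_X - rank H_Z`, so everything reduces to ranks of Kronecker block
matrices. In Kronecker form `H'_X = (H_X ⊗ 1 | 1 ⊗ H_Cᵀ)`, and `H_Cᵀ` has a left inverse `E`
because `H_C` has full row rank. Hence the column spaces of `A ⊗ 1` and `1 ⊗ H_Cᵀ` meet exactly in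
that of `A ⊗ H_Cᵀ`, which gives `rank (A ⊗ 1 | 1 ⊗ H_Cᵀ) = rank A · n_c + m · r - rank A · r`.
With `A = H_X` this is `rank H'_X`. The second block row of `H'_Zᵀ` is `H_X ⊗ E` times the first one
(as `H_X H_Zᵀ = 0`), so with `A = H_Zᵀ` it is also `rank H'_Z`. Subtracting both ranks from
`n n_c + n_X r` leaves `(n - rank H_X - rank H_Z)(n_c - r) = k k_c`.
-/

open Module LinearMap
open scoped Kronecker

theorem LinearMap.finrank_range_compLeft {K V W : Type*} [Field K] [AddCommGroup V] [Module K V]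
    [AddCommGroup W] [Module K W] [FiniteDimensional K W] (f : V →ₗ[K] W) (I : Type*) [Fintype I] :
    finrank K (range (f.compLeft I)) = Fintype.card I * finrank K (range f) := by
  have hinj : Function.Injective ((range f).subtype.compLeft I) :=
    fun _ _ h => funext fun i => Subtype.ext (congrFun h i)
  have hrange : range (f.compLeft I) = range ((range f).subtype.compLeft I) := by
    rw [range_compLeft, range_compLeft, Submodule.range_subtype]
  rw [hrange, finrank_range_of_inj hinj, finrank_pi_fintype, Finset.sum_const, Finset.card_univ,
    smul_eq_mul]

namespace Matrix

variable {K : Type*} [Field K] {l m n p q : Type*}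

theorem kronecker_eq_reindex_kronecker {α : Type*} [CommMagma α] (A : Matrix l m α)
    (B : Matrix n p α) :
    A ⊗ₖ B = reindex (Equiv.prodComm n l) (Equiv.prodComm p m) (B ⊗ₖ A) := by
  ext ⟨i, k⟩ ⟨j, t⟩
  simp [kroneckerMap_apply, mul_comm]

theorem mulVecLin_one_kronecker [Fintype l] [Fintype n] [DecidableEq l] (A : Matrix m n K) :
    ((1 : Matrix l l K) ⊗ₖ A).mulVecLin =
      (LinearEquiv.curry K K l m).symm.toLinearMap ∘ₗ A.mulVecLin.compLeft l ∘ₗ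
        (LinearEquiv.curry K K l n).toLinearMap := by
  ext v ⟨i, k⟩
  simp [mulVec, dotProduct, kroneckerMap_apply, one_apply, Fintype.sum_prod_type, ite_mul]

theorem rank_one_kronecker [Fintype l] [Fintype m] [Fintype n] [DecidableEq l]
    (A : Matrix m n K) : ((1 : Matrix l l K) ⊗ₖ A).rank = Fintype.card l * A.rank := by
  rw [rank, mulVecLin_one_kronecker, LinearMap.range_comp,
    LinearMap.range_comp_of_range_eq_top _ (LinearEquiv.range _), LinearEquiv.finrank_map_eq,
    finrank_range_compLeft, rank]

theorem rank_kronecker_one [Fintype m] [Fintype n] [Fintype p] [DecidableEq p]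
    (A : Matrix m n K) : (A ⊗ₖ (1 : Matrix p p K)).rank = A.rank * Fintype.card p := by
  rw [kronecker_eq_reindex_kronecker, rank_reindex, rank_one_kronecker, mul_comm]

theorem rank_mul_eq_right_of_mul_eq_one [Fintype l] [Fintype m] [Fintype n] [DecidableEq n]
    {E : Matrix n m K} {B : Matrix m n K} (h : E * B = 1) (A : Matrix n l K) :
    (B * A).rank = A.rank := by
  refine le_antisymm (rank_mul_le_right B A) ?_
  calc A.rank = (E * (B * A)).rank := by rw [← Matrix.mul_assoc, h, Matrix.one_mul]
    _ ≤ (B * A).rank := rank_mul_le_right E _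

theorem rank_eq_card_of_mul_eq_one [Fintype m] [Fintype n] [DecidableEq n]
    {E : Matrix n m K} {B : Matrix m n K} (h : E * B = 1) : B.rank = Fintype.card n := by
  simpa using rank_mul_eq_right_of_mul_eq_one h (1 : Matrix n n K)

theorem range_mulVecLin_fromCols [Fintype n] [Fintype p] (A : Matrix m n K) (B : Matrix m p K) :
    range (fromCols A B).mulVecLin = range A.mulVecLin ⊔ range B.mulVecLin := by
  have hsplit : (fromCols A B).mulVecLin = (A.mulVecLin.coprod B.mulVecLin) ∘ₗ
      (LinearEquiv.sumArrowLequivProdArrow n p K K).toLinearMap := by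
    ext v : 1
    simp only [mulVecLin_apply, fromCols_mulVec]
    rfl
  rw [hsplit, range_comp_of_range_eq_top _ (LinearEquiv.range _), range_coprod]

theorem rank_fromCols_add_finrank_inf [Fintype m] [Fintype n] [Fintype p] (A : Matrix m n K)
    (B : Matrix m p K) :
    (fromCols A B).rank + finrank K ↥(range A.mulVecLin ⊓ range B.mulVecLin) = A.rank + B.rank := by
  have h := Submodule.finrank_sup_add_finrank_inf_eq (range A.mulVecLin) (range B.mulVecLin)
  rwa [← range_mulVecLin_fromCols] at h

theorem range_kronecker_one_inf_range_one_kronecker [Fintype m] [Fintype n] [Fintype p]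
    [Fintype q] [DecidableEq m] [DecidableEq n] [DecidableEq p] [DecidableEq q]
    {C : Matrix p q K} {E : Matrix q p K} (hE : E * C = 1) (A : Matrix m n K) :
    range (A ⊗ₖ (1 : Matrix p p K)).mulVecLin ⊓ range ((1 : Matrix m m K) ⊗ₖ C).mulVecLin =
      range (A ⊗ₖ C).mulVecLin := by
  apply le_antisymm
  · rintro _ ⟨⟨u, rfl⟩, ⟨w, hw⟩⟩
    simp only [mulVecLin_apply] at hw ⊢
    have hw' : w = (A ⊗ₖ E) *ᵥ u := by
      calc w = ((1 : Matrix m m K) ⊗ₖ E * ((1 : Matrix m m K) ⊗ₖ C)) *ᵥ w := by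
            rw [← mul_kronecker_mul, hE, Matrix.one_mul, one_kronecker_one, one_mulVec]
        _ = (A ⊗ₖ E) *ᵥ u := by
            rw [← mulVec_mulVec, hw, mulVec_mulVec, ← mul_kronecker_mul, Matrix.one_mul,
              Matrix.mul_one]
    refine ⟨((1 : Matrix n n K) ⊗ₖ E) *ᵥ u, ?_⟩
    rw [mulVecLin_apply, ← hw, hw', mulVec_mulVec, mulVec_mulVec, ← mul_kronecker_mul,
      ← mul_kronecker_mul, Matrix.mul_one, Matrix.one_mul]
  · have hleft : A ⊗ₖ C = A ⊗ₖ (1 : Matrix p p K) * ((1 : Matrix n n K) ⊗ₖ C) := by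
      rw [← mul_kronecker_mul, Matrix.mul_one, Matrix.one_mul]
    have hright : A ⊗ₖ C = (1 : Matrix m m K) ⊗ₖ C * (A ⊗ₖ (1 : Matrix q q K)) := by
      rw [← mul_kronecker_mul, Matrix.mul_one, Matrix.one_mul]
    refine le_inf ?_ ?_
    · rw [hleft, mulVecLin_mul]
      exact range_comp_le_range _ _
    · rw [hright, mulVecLin_mul]
      exact range_comp_le_range _ _

theorem rank_fromCols_kronecker_one_one_kronecker [Fintype m] [Fintype n] [Fintype p]
    [Fintype q] [DecidableEq m] [DecidableEq n] [DecidableEq p] [DecidableEq q]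
    {C : Matrix p q K} {E : Matrix q p K} (hE : E * C = 1) (A : Matrix m n K) :
    (fromCols (A ⊗ₖ (1 : Matrix p p K)) ((1 : Matrix m m K) ⊗ₖ C)).rank +
        A.rank * Fintype.card q =
      A.rank * Fintype.card p + Fintype.card m * Fintype.card q := by
  have hE' : (1 : Matrix m m K) ⊗ₖ E * ((1 : Matrix m m K) ⊗ₖ C) = 1 := by
    rw [← mul_kronecker_mul, hE, Matrix.one_mul, one_kronecker_one]
  have hAC : (A ⊗ₖ C).rank = A.rank * Fintype.card q := by
    rw [show A ⊗ₖ C = (1 : Matrix m m K) ⊗ₖ C * (A ⊗ₖ (1 : Matrix q q K)) by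
        rw [← mul_kronecker_mul, Matrix.mul_one, Matrix.one_mul],
      rank_mul_eq_right_of_mul_eq_one hE', rank_kronecker_one]
  have h1C : ((1 : Matrix m m K) ⊗ₖ C).rank = Fintype.card m * Fintype.card q := by
    rw [rank_eq_card_of_mul_eq_one hE', Fintype.card_prod]
  have hsum := rank_fromCols_add_finrank_inf (A ⊗ₖ (1 : Matrix p p K)) ((1 : Matrix m m K) ⊗ₖ C)
  rwa [range_kronecker_one_inf_range_one_kronecker hE, ← rank, hAC, h1C, rank_kronecker_one] at hsum

theorem rank_fromRows_mul_self [Fintype l] [Fintype m] [Fintype n] [DecidableEq m]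
    (T : Matrix m n K) (X : Matrix l m K) : (fromRows T (X * T)).rank = T.rank := by
  have hfactor : fromRows T (X * T) = fromRows (1 : Matrix m m K) X * T := by
    rw [fromRows_mul, Matrix.one_mul]
  have hinv :
      fromCols (1 : Matrix m m K) (0 : Matrix m l K) * fromRows (1 : Matrix m m K) X = 1 := by
    rw [fromCols_mul_fromRows, Matrix.one_mul, Matrix.zero_mul, add_zero]
  rw [hfactor, rank_mul_eq_right_of_mul_eq_one hinv]

theorem exists_mul_eq_one_of_linearIndependent_row [Fintype p] [Fintype q] [DecidableEq p]
    {C : Matrix p q K} (hC : LinearIndependent K C.row) : ∃ D : Matrix q p K, C * D = 1 := by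
  refine mulVec_surjective_iff_exists_right_inverse.mp ?_
  have htop : range C.mulVecLin = ⊤ := by
    apply Submodule.eq_top_of_finrank_eq
    rw [← rank, hC.rank_matrix, finrank_fintype_fun_eq_card]
  exact range_eq_top.mp htop

end Matrix

theorem rowSpan_eq_range_mulVecLin_transpose {ι κ : Type*} [Fintype ι] [Fintype κ]
    (N : Matrix ι κ (ZMod 2)) : rowSpan N = range Nᵀ.mulVecLin := by
  rw [range_mulVecLin, col_transpose]
  rfl

theorem logicalDim_add_rank_add_rank {ι₁ ι₂ κ : Type*} [Fintype ι₁] [Fintype ι₂] [Fintype κ]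
    {M : Matrix ι₁ κ (ZMod 2)} {N : Matrix ι₂ κ (ZMod 2)} (h : M * Nᵀ = 0) :
    logicalDim M N + M.rank + N.rank = Fintype.card κ := by
  have hle : rowSpan N ≤ kerMat M := by
    rw [rowSpan_eq_range_mulVecLin_transpose, kerMat, range_le_ker_iff, ← mulVecLin_mul, h,
      mulVecLin_zero]
  have hquot := Submodule.finrank_quotient_add_finrank ((rowSpan N).comap (kerMat M).subtype)
  have hrow : finrank (ZMod 2) (rowSpan N) = N.rank := by
    rw [rowSpan_eq_range_mulVecLin_transpose, ← rank_transpose N]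
    rfl
  rw [(Submodule.comapSubtypeEquivOfLe hle).finrank_eq, hrow] at hquot
  have hnullity := M.mulVecLin.finrank_range_add_finrank_ker
  rw [← Matrix.rank, ← kerMat, finrank_fintype_fun_eq_card] at hnullity
  rw [logicalDim]
  omega

section Thickening

variable {nX nZ n r nc : ℕ} (HX : Matrix (Fin nX) (Fin n) (ZMod 2))
  (HZ : Matrix (Fin nZ) (Fin n) (ZMod 2)) (HC : Matrix (Fin r) (Fin nc) (ZMod 2))

theorem thickX_eq_fromCols :
    thickX HX HC = fromCols (HX ⊗ₖ (1 : Matrix (Fin nc) (Fin nc) (ZMod 2)))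
      ((1 : Matrix (Fin nX) (Fin nX) (ZMod 2)) ⊗ₖ HCᵀ) := by
  ext ⟨x, c⟩ (⟨i, c'⟩ | ⟨x', j⟩) <;> simp [thickX, one_apply, eq_comm]

theorem thickZ_eq_fromBlocks :
    thickZ HX HZ HC = fromBlocks (HZ ⊗ₖ (1 : Matrix (Fin nc) (Fin nc) (ZMod 2))) 0
      ((1 : Matrix (Fin n) (Fin n) (ZMod 2)) ⊗ₖ HC)
      (HXᵀ ⊗ₖ (1 : Matrix (Fin r) (Fin r) (ZMod 2))) := by
  ext (⟨z, c⟩ | ⟨i, j⟩) (⟨i', c'⟩ | ⟨x, j'⟩) <;> simp [thickZ, one_apply, eq_comm]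

theorem thickX_mul_transpose_thickZ (hcss : HX * HZᵀ = 0) :
    thickX HX HC * (thickZ HX HZ HC)ᵀ = 0 := by
  rw [thickX_eq_fromCols, thickZ_eq_fromBlocks, fromBlocks_transpose, fromCols_mul_fromBlocks]
  simp only [← kroneckerMap_transpose, ← mul_kronecker_mul, transpose_transpose, transpose_one,
    transpose_zero, Matrix.mul_zero, Matrix.mul_one, Matrix.one_mul, hcss, zero_kronecker,
    add_zero]
  -- left: `fromCols 0 (H_X ⊗ H_Cᵀ + H_X ⊗ H_Cᵀ)`, which vanishes in characteristic 2
  ext x (j | j) <;> simp [CharTwo.add_self_eq_zero]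

theorem rank_thickX {E : Matrix (Fin r) (Fin nc) (ZMod 2)} (hE : E * HCᵀ = 1) :
    (thickX HX HC).rank + HX.rank * r = HX.rank * nc + nX * r := by
  have h := rank_fromCols_kronecker_one_one_kronecker hE HX
  rwa [← thickX_eq_fromCols, Fintype.card_fin, Fintype.card_fin, Fintype.card_fin] at h

theorem rank_thickZ (hcss : HX * HZᵀ = 0) {E : Matrix (Fin r) (Fin nc) (ZMod 2)}
    (hE : E * HCᵀ = 1) : (thickZ HX HZ HC).rank + HZ.rank * r = HZ.rank * nc + n * r := by
  set T := fromCols (HZᵀ ⊗ₖ (1 : Matrix (Fin nc) (Fin nc) (ZMod 2)))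
    ((1 : Matrix (Fin n) (Fin n) (ZMod 2)) ⊗ₖ HCᵀ) with hT
  have htranspose : (thickZ HX HZ HC)ᵀ = fromRows T ((HX ⊗ₖ E) * T) := by
    rw [hT, mul_fromCols, ← mul_kronecker_mul, ← mul_kronecker_mul, hcss, hE, zero_kronecker,
      Matrix.mul_one, fromRows_fromCols_eq_fromBlocks, thickZ_eq_fromBlocks, fromBlocks_transpose]
    simp only [← kroneckerMap_transpose, transpose_one, transpose_transpose, transpose_zero]
  have h := rank_fromCols_kronecker_one_one_kronecker hE HZᵀ
  rw [← rank_transpose, htranspose, rank_fromRows_mul_self]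
  simpa only [rank_transpose, Fintype.card_fin] using h

end Thickening

/-- **Generalized thickening is a CSS code with `k · k_c` logical qubits.** -/
theorem thickening_logical_qubits {nX nZ n r nc : ℕ}
    (HX : Matrix (Fin nX) (Fin n) (ZMod 2)) (HZ : Matrix (Fin nZ) (Fin n) (ZMod 2))
    (HC : Matrix (Fin r) (Fin nc) (ZMod 2))
    (hcss : HX * HZ.transpose = 0)
    (hrank : LinearIndependent (ZMod 2) (fun i : Fin r => HC i)) :
    thickX HX HC * (thickZ HX HZ HC).transpose = 0 ∧
      logicalDim (thickX HX HC) (thickZ HX HZ HC) =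
        logicalDim HX HZ * Module.finrank (ZMod 2) (LinearMap.ker HC.mulVecLin) := by
  obtain ⟨D, hD⟩ := exists_mul_eq_one_of_linearIndependent_row hrank
  have hE : Dᵀ * HCᵀ = 1 := by rw [← transpose_mul, hD, transpose_one]
  have horth := thickX_mul_transpose_thickZ HX HZ HC hcss
  refine ⟨horth, ?_⟩
  have hthick := logicalDim_add_rank_add_rank horth
  have hcode := logicalDim_add_rank_add_rank hcss
  have hX := rank_thickX HX HC hE
  have hZ := rank_thickZ HX HZ HC hcss hE
  have hC := HC.mulVecLin.finrank_range_add_finrank_ker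
  rw [← Matrix.rank, hrank.rank_matrix, finrank_fintype_fun_eq_card] at hC
  simp only [Fintype.card_sum, Fintype.card_prod, Fintype.card_fin] at hthick hcode hC
  zify at hthick hcode hX hZ hC ⊢
  linear_combination hthick - hX - hZ + ((r : ℤ) - nc) * hcode -
    (logicalDim HX HZ : ℤ) * hC
end

section
/- Let (H_X, H_Z) be a CSS code that has at least one X logical operator, with X distance d_X, and let H_C ∈ F₂^{(n_c−k_c) × n_c} be a classical parity check matrix of full row rank n_c − k_c with ker(H_C) ≠ {0}; let d_c be the minimum Hamming weight of a nonzero element of ker(H_C). Let H'_X, H'_Z be the check matrices of the generalized thickened code. Then the thickened code has at least one X logical operator and its X distance equals d_X · d_c: the minimum Hamming weight over ker(H'_Z) \ rowspan(H'_X) equals d_X · d_c. -/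
open Matrix

/- ### Auxiliary lemmas -/

lemma zmod2_add_self (a : ZMod 2) : a + a = 0 := by
  have : ∀ a : ZMod 2, a + a = 0 := by decide
  exact this a

lemma zmod2_eq_one (a : ZMod 2) (h : a ≠ 0) : a = 1 := by
  have : ∀ a : ZMod 2, a ≠ 0 → a = 1 := by decide
  exact this a h

lemma zmod2_eq_of_add_eq_zero {a b : ZMod 2} (h : a + b = 0) : a = b := by
  have : ∀ a b : ZMod 2, a + b = 0 → a = b := by decide
  exact this a b h

lemma hammingNorm_eq_sum {ι : Type*} [Fintype ι] (x : ι → ZMod 2) :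
    hammingNorm x = ∑ i, if x i ≠ 0 then 1 else 0 := by
  simp [hammingNorm, Finset.card_filter]

lemma mem_rowSpan_iff {ι κ : Type*} [Fintype ι] [Fintype κ] (M : Matrix ι κ (ZMod 2))
    (u : κ → ZMod 2) :
    u ∈ rowSpan M ↔ ∃ a : ι → ZMod 2, ∀ p, u p = ∑ x, a x * M x p := by
  rw [rowSpan, Submodule.mem_span_range_iff_exists_fun]
  constructor
  · rintro ⟨a, ha⟩
    exact ⟨a, fun p => by rw [← ha]; simp [Finset.sum_apply]⟩
  · rintro ⟨a, ha⟩
    refine ⟨a, funext fun p => ?_⟩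
    rw [Finset.sum_apply]
    simp [(ha p).symm]

lemma exists_dual_sep {V : Type*} [AddCommGroup V] [Module (ZMod 2) V]
    (S : Submodule (ZMod 2) V) (u : V) (hu : u ∉ S) :
    ∃ l : V →ₗ[ZMod 2] ZMod 2, (∀ s ∈ S, l s = 0) ∧ l u ≠ 0 := by
  haveI : Fact (Nat.Prime 2) := ⟨Nat.prime_two⟩
  have hq : S.mkQ u ≠ 0 := by
    simpa [Submodule.Quotient.mk_eq_zero] using hu
  have h2 : ¬ ∀ g : Module.Dual (ZMod 2) (V ⧸ S), g (S.mkQ u) = 0 := by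
    rw [Module.forall_dual_apply_eq_zero_iff]
    exact hq
  push_neg at h2
  obtain ⟨g, hg⟩ := h2
  refine ⟨g ∘ₗ S.mkQ, fun s hs => ?_, hg⟩
  simp [Submodule.mkQ_apply, (Submodule.Quotient.mk_eq_zero S).2 hs]

lemma hc_mulVec_surj {r nc : ℕ} (HC : Matrix (Fin r) (Fin nc) (ZMod 2))
    (hrank : LinearIndependent (ZMod 2) fun i : Fin r => HC i) :
    LinearMap.range HC.mulVecLin = ⊤ := by
  by_contra hne
  obtain ⟨z, hz⟩ : ∃ z, z ∉ LinearMap.range HC.mulVecLin := by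
    by_contra hall
    push_neg at hall
    exact hne (Submodule.eq_top_iff'.mpr hall)
  obtain ⟨l, hl0, hlz⟩ := exists_dual_sep _ z hz
  set y : Fin r → ZMod 2 := fun j => l (Pi.single j 1) with hy
  have hrep : ∀ v : Fin r → ZMod 2, l v = ∑ j, v j * y j := by
    intro v
    conv_lhs => rw [pi_eq_sum_univ v]
    rw [map_sum]
    refine Finset.sum_congr rfl fun j _ => ?_
    rw [_root_.map_smul, smul_eq_mul, hy]
    congr 1
    congr 1
    ext t
    simp [Pi.single_apply, eq_comm]
  have hann : ∀ c, ∑ j, HC j c * y j = 0 := by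
    intro c
    have h1 : l (HC.mulVec (Pi.single c 1)) = 0 :=
      hl0 _ ⟨Pi.single c 1, rfl⟩
    rw [hrep] at h1
    simpa [Matrix.mulVec_single] using h1
  have hy0 : y = 0 := by
    have := Fintype.linearIndependent_iff.mp hrank y ?_
    · ext j; exact this j
    · funext c
      rw [Finset.sum_apply]
      simpa [mul_comm] using hann c
  apply hlz
  rw [hrep, hy0]
  simp

lemma thickZ_ker_iff {nX nZ n r nc : ℕ} (HX : Matrix (Fin nX) (Fin n) (ZMod 2))
    (HZ : Matrix (Fin nZ) (Fin n) (ZMod 2)) (HC : Matrix (Fin r) (Fin nc) (ZMod 2))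
    (w : ((Fin n × Fin nc) ⊕ (Fin nX × Fin r)) → ZMod 2) :
    (thickZ HX HZ HC).mulVec w = 0 ↔
      ((∀ z c, ∑ i, HZ z i * w (Sum.inl (i, c)) = 0) ∧
       (∀ i j, ∑ c, HC j c * w (Sum.inl (i, c)) + ∑ x, HX x i * w (Sum.inr (x, j)) = 0)) := by
  rw [funext_iff]
  constructor
  · intro h
    refine ⟨fun z c => ?_, fun i j => ?_⟩
    · have := h (Sum.inl (z, c))
      simpa [thickZ, Matrix.mulVec, dotProduct, Fintype.sum_sum_type,
        Fintype.sum_prod_type_right, ite_mul] using this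
    · have := h (Sum.inr (i, j))
      simpa [thickZ, Matrix.mulVec, dotProduct, Fintype.sum_sum_type,
        Fintype.sum_prod_type, ite_mul] using this
  · rintro ⟨h1, h2⟩ s
    match s with
    | Sum.inl (z, c) =>
      have := h1 z c
      simpa [thickZ, Matrix.mulVec, dotProduct, Fintype.sum_sum_type,
        Fintype.sum_prod_type_right, ite_mul] using this
    | Sum.inr (i, j) =>
      have := h2 i j
      simpa [thickZ, Matrix.mulVec, dotProduct, Fintype.sum_sum_type,
        Fintype.sum_prod_type, ite_mul] using this

lemma thickX_rowSpan_iff {nX n r nc : ℕ} (HX : Matrix (Fin nX) (Fin n) (ZMod 2))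
    (HC : Matrix (Fin r) (Fin nc) (ZMod 2))
    (w : ((Fin n × Fin nc) ⊕ (Fin nX × Fin r)) → ZMod 2) :
    w ∈ rowSpan (thickX HX HC) ↔
      ∃ A : Fin nX → Fin nc → ZMod 2,
        (∀ i c, w (Sum.inl (i, c)) = ∑ x, A x c * HX x i) ∧
        (∀ x j, w (Sum.inr (x, j)) = ∑ c, A x c * HC j c) := by
  rw [mem_rowSpan_iff]
  constructor
  · rintro ⟨a, ha⟩
    refine ⟨fun x c => a (x, c), fun i c => ?_, fun x j => ?_⟩
    · rw [ha (Sum.inl (i, c))]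
      simp [thickX, Fintype.sum_prod_type, mul_ite]
    · rw [ha (Sum.inr (x, j))]
      simp [thickX, Fintype.sum_prod_type_right, mul_ite]
  · rintro ⟨A, hA1, hA2⟩
    refine ⟨fun s => A s.1 s.2, fun p => ?_⟩
    match p with
    | Sum.inl (i, c) =>
      rw [hA1 i c]
      simp [thickX, Fintype.sum_prod_type, mul_ite]
    | Sum.inr (x, j) =>
      rw [hA2 x j]
      simp [thickX, Fintype.sum_prod_type_right, mul_ite]

/-- **Generalized thickening multiplies the X distance by `d_c`.** -/
theorem thickening_X_distance {nX nZ n r nc : ℕ}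
    (HX : Matrix (Fin nX) (Fin n) (ZMod 2)) (HZ : Matrix (Fin nZ) (Fin n) (ZMod 2))
    (HC : Matrix (Fin r) (Fin nc) (ZMod 2))
    (hcss : HX * HZ.transpose = 0)
    (hrank : LinearIndependent (ZMod 2) (fun i : Fin r => HC i))
    (hkc : ∃ v : Fin nc → ZMod 2, HC.mulVec v = 0 ∧ v ≠ 0)
    (hlog : (logicalSet HZ HX).Nonempty) :
    (logicalSet (thickZ HX HZ HC) (thickX HX HC)).Nonempty ∧
      minWt (logicalSet (thickZ HX HZ HC) (thickX HX HC)) =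
        minWt (logicalSet HZ HX) *
          sInf (hammingNorm '' {v : Fin nc → ZMod 2 | HC.mulVec v = 0 ∧ v ≠ 0}) := by
  classical
  haveI : Fact (Nat.Prime 2) := ⟨Nat.prime_two⟩
  set Kc : Set (Fin nc → ZMod 2) := {v | HC.mulVec v = 0 ∧ v ≠ 0} with hKcdef
  set dX := minWt (logicalSet HZ HX) with hdXdef
  set dc := sInf (hammingNorm '' Kc) with hdcdef
  -- the minima are attained
  obtain ⟨v0, hv0mem, hv0wt⟩ : ∃ v0 ∈ logicalSet HZ HX, hammingNorm v0 = dX := by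
    obtain ⟨v0, hm, he⟩ := Nat.sInf_mem (hlog.image hammingNorm)
    exact ⟨v0, hm, he⟩
  have hKcne : Kc.Nonempty := hkc
  obtain ⟨c0, hc0mem, hc0wt⟩ : ∃ c0 ∈ Kc, hammingNorm c0 = dc := by
    obtain ⟨c0, hm, he⟩ := Nat.sInf_mem (hKcne.image hammingNorm)
    exact ⟨c0, hm, he⟩
  -- the witness logical operator of the thickened code
  set w0 : ((Fin n × Fin nc) ⊕ (Fin nX × Fin r)) → ZMod 2 :=
    Sum.elim (fun p => v0 p.1 * c0 p.2) 0 with hw0def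
  have hw0ker : (thickZ HX HZ HC).mulVec w0 = 0 := by
    rw [thickZ_ker_iff]
    constructor
    · intro z c
      have h0 : ∑ i, HZ z i * v0 i = 0 := by
        have := congrFun hv0mem.1 z
        simpa [Matrix.mulVec, dotProduct] using this
      have e : ∑ i, HZ z i * w0 (Sum.inl (i, c)) = (∑ i, HZ z i * v0 i) * c0 c := by
        rw [Finset.sum_mul]
        refine Finset.sum_congr rfl fun i _ => ?_
        simp only [hw0def, Sum.elim_inl]
        ring
      rw [e, h0, zero_mul]
    · intro i j
      have h0 : ∑ c, HC j c * c0 c = 0 := by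
        have := congrFun hc0mem.1 j
        simpa [Matrix.mulVec, dotProduct] using this
      have e : ∑ c, HC j c * w0 (Sum.inl (i, c)) = v0 i * ∑ c, HC j c * c0 c := by
        rw [Finset.mul_sum]
        refine Finset.sum_congr rfl fun c _ => ?_
        simp only [hw0def, Sum.elim_inl]
        ring
      have e2 : ∑ x, HX x i * w0 (Sum.inr (x, j)) = 0 := by
        refine Finset.sum_eq_zero fun x _ => ?_
        simp [hw0def]
      rw [e, e2, h0, mul_zero, add_zero]
  obtain ⟨cstar, hcstar⟩ : ∃ cst, c0 cst ≠ 0 := by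
    by_contra hall
    push_neg at hall
    exact hc0mem.2 (funext fun c => hall c)
  have hw0nrs : w0 ∉ rowSpan (thickX HX HC) := by
    intro hmem
    obtain ⟨A, hA1, _⟩ := (thickX_rowSpan_iff HX HC w0).mp hmem
    apply hv0mem.2
    rw [mem_rowSpan_iff]
    refine ⟨fun x => A x cstar, fun i => ?_⟩
    have h := hA1 i cstar
    simp only [hw0def, Sum.elim_inl] at h
    rwa [zmod2_eq_one _ hcstar, mul_one] at h
  have hw0mem : w0 ∈ logicalSet (thickZ HX HZ HC) (thickX HX HC) := ⟨hw0ker, hw0nrs⟩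
  have hw0wt : hammingNorm w0 = dX * dc := by
    rw [hammingNorm_eq_sum, Fintype.sum_sum_type]
    have h2 : (∑ p : Fin nX × Fin r, if w0 (Sum.inr p) ≠ 0 then 1 else 0) = 0 := by
      refine Finset.sum_eq_zero fun p _ => ?_
      simp [hw0def]
    have h1 : (∑ p : Fin n × Fin nc, if w0 (Sum.inl p) ≠ 0 then 1 else 0)
        = (∑ i, if v0 i ≠ 0 then 1 else 0) * (∑ c, if c0 c ≠ 0 then 1 else 0) := by
      rw [Finset.sum_mul_sum, Fintype.sum_prod_type]
      refine Finset.sum_congr rfl fun i _ => Finset.sum_congr rfl fun c _ => ?_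
      simp only [hw0def, Sum.elim_inl]
      by_cases hv : v0 i = 0
      · simp [hv]
      · by_cases hc : c0 c = 0
        · simp [hc]
        · rw [zmod2_eq_one _ hv, zmod2_eq_one _ hc, one_mul]
          simp [hc]
    rw [h1, h2, add_zero, ← hammingNorm_eq_sum, ← hammingNorm_eq_sum, hv0wt, hc0wt]
  -- the lower bound
  have hlb : ∀ w ∈ logicalSet (thickZ HX HZ HC) (thickX HX HC), dX * dc ≤ hammingNorm w := by
    intro w hw
    obtain ⟨hker, hnrs⟩ := hw
    rw [thickZ_ker_iff] at hker
    obtain ⟨h1, h2⟩ := hker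
    have h2' : ∀ i j, ∑ c, HC j c * w (Sum.inl (i, c)) = ∑ x, HX x i * w (Sum.inr (x, j)) :=
      fun i j => zmod2_eq_of_add_eq_zero (h2 i j)
    -- some column of the A-region is a logical of the original code
    have hcol : ∃ c1, (fun i => w (Sum.inl (i, c1))) ∉ rowSpan HX := by
      by_contra hall
      push_neg at hall
      apply hnrs
      rw [thickX_rowSpan_iff]
      choose a ha using fun c => (mem_rowSpan_iff HX _).mp (hall c)
      have ha' : ∀ c i, w (Sum.inl (i, c)) = ∑ x, a c x * HX x i := fun c i => ha c i
      obtain ⟨σ, hσ⟩ := LinearMap.exists_rightInverse_of_surjective HC.mulVecLin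
        (hc_mulVec_surj HC hrank)
      set W' : Fin nX → Fin r → ZMod 2 :=
        fun x j => w (Sum.inr (x, j)) + ∑ c, HC j c * a c x with hW'def
      have hW'0 : ∀ i j, ∑ x, HX x i * W' x j = 0 := by
        intro i j
        have e1 : ∑ x, HX x i * W' x j
            = ∑ x, HX x i * w (Sum.inr (x, j)) + ∑ c, HC j c * ∑ x, HX x i * a c x := by
          simp only [hW'def, mul_add, Finset.sum_add_distrib]
          congr 1
          calc ∑ x, HX x i * ∑ c, HC j c * a c x
              = ∑ x, ∑ c, HX x i * (HC j c * a c x) :=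
                Finset.sum_congr rfl fun x _ => Finset.mul_sum _ _ _
            _ = ∑ c, ∑ x, HX x i * (HC j c * a c x) := Finset.sum_comm
            _ = ∑ c, HC j c * ∑ x, HX x i * a c x := by
                refine Finset.sum_congr rfl fun c _ => ?_
                rw [Finset.mul_sum]
                exact Finset.sum_congr rfl fun x _ => by ring
        have e2 : ∀ c, ∑ x, HX x i * a c x = w (Sum.inl (i, c)) := by
          intro c
          rw [ha' c i]
          exact Finset.sum_congr rfl fun x _ => by ring
        rw [e1, ← h2' i j]
        simp only [e2]
        exact zmod2_add_self _
      refine ⟨fun x c => a c x + σ (W' x) c, fun i c => ?_, fun x j => ?_⟩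
      · have hσ0 : ∑ x, σ (W' x) c * HX x i = 0 := by
          have hz : (∑ x, HX x i • W' x) = (0 : Fin r → ZMod 2) := by
            funext j
            rw [Finset.sum_apply]
            simpa using hW'0 i j
          have hmap : σ (∑ x, HX x i • W' x) = ∑ x, HX x i • σ (W' x) := by
            rw [map_sum]
            exact Finset.sum_congr rfl fun x _ => _root_.map_smul σ _ _
          rw [hz, map_zero] at hmap
          have h3 := congrFun hmap c
          rw [Finset.sum_apply] at h3
          simp only [Pi.zero_apply, Pi.smul_apply, smul_eq_mul] at h3
          rw [show (∑ x, σ (W' x) c * HX x i) = ∑ x, HX x i * σ (W' x) c from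
            Finset.sum_congr rfl fun x _ => mul_comm _ _]
          exact h3.symm
        simp only [add_mul, Finset.sum_add_distrib]
        rw [hσ0, add_zero]
        exact ha' c i
      · have hsec : ∑ c, σ (W' x) c * HC j c = W' x j := by
          have := congrFun (LinearMap.congr_fun hσ (W' x)) j
          simpa [Matrix.mulVecLin, Matrix.mulVec, dotProduct, mul_comm] using this
        simp only [add_mul, Finset.sum_add_distrib]
        rw [hsec]
        have hcomm : ∑ c, a c x * HC j c = ∑ c, HC j c * a c x :=
          Finset.sum_congr rfl fun c _ => mul_comm _ _
        rw [hcomm]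
        simp only [hW'def]
        have hs := zmod2_add_self (∑ c, HC j c * a c x)
        calc w (Sum.inr (x, j))
            = w (Sum.inr (x, j)) + (∑ c, HC j c * a c x + ∑ c, HC j c * a c x) := by
              rw [hs, add_zero]
          _ = ∑ c, HC j c * a c x + (w (Sum.inr (x, j)) + ∑ c, HC j c * a c x) := by ring
    obtain ⟨c1, hc1⟩ := hcol
    obtain ⟨l, hl0, hlne⟩ := exists_dual_sep (rowSpan HX) _ hc1
    set f : Fin nc → ZMod 2 := fun c => l (fun i => w (Sum.inl (i, c))) with hfdef
    have hfker : HC.mulVec f = 0 := by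
      funext j
      show ∑ c, HC j c * f c = 0
      have e2 : (fun i => ∑ c, HC j c * w (Sum.inl (i, c)))
          = ∑ x, w (Sum.inr (x, j)) • (HX x) := by
        funext i
        rw [Finset.sum_apply, h2' i j]
        exact Finset.sum_congr rfl fun x _ => by simp [mul_comm]
      calc ∑ c, HC j c * f c
          = l (∑ c, HC j c • fun i => w (Sum.inl (i, c))) := by
            rw [map_sum]
            exact Finset.sum_congr rfl fun c _ => by
              rw [_root_.map_smul, smul_eq_mul]
        _ = l (fun i => ∑ c, HC j c * w (Sum.inl (i, c))) := by
            congr 1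
            funext i
            rw [Finset.sum_apply]
            rfl
        _ = l (∑ x, w (Sum.inr (x, j)) • HX x) := by rw [e2]
        _ = ∑ x, w (Sum.inr (x, j)) * l (HX x) := by
            rw [map_sum]
            exact Finset.sum_congr rfl fun x _ => by
              rw [_root_.map_smul, smul_eq_mul]
        _ = 0 := Finset.sum_eq_zero fun x _ => by
            rw [hl0 (HX x) (Submodule.subset_span ⟨x, rfl⟩), mul_zero]
    have hfne : f ≠ 0 := by
      intro h
      apply hlne
      have := congrFun h c1
      simpa [hfdef] using this
    have hdc_le : dc ≤ hammingNorm f := Nat.sInf_le ⟨f, ⟨hfker, hfne⟩, rfl⟩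
    have hcolwt : ∀ c, f c ≠ 0 → dX ≤ hammingNorm (fun i => w (Sum.inl (i, c))) := by
      intro c hc
      refine Nat.sInf_le ⟨_, ⟨?_, ?_⟩, rfl⟩
      · funext z
        show ∑ i, HZ z i * w (Sum.inl (i, c)) = 0
        exact h1 z c
      · intro hmem
        exact hc (hl0 _ hmem)
    have key : ∀ c : Fin nc,
        (if f c ≠ 0 then 1 else 0) * dX ≤ hammingNorm (fun i => w (Sum.inl (i, c))) := by
      intro c
      by_cases hc : f c = 0
      · simp [hc]
      · simpa [hc] using hcolwt c hc
    calc dX * dc ≤ dX * hammingNorm f := Nat.mul_le_mul le_rfl hdc_le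
      _ = ∑ c, (if f c ≠ 0 then 1 else 0) * dX := by
          rw [hammingNorm_eq_sum, mul_comm, Finset.sum_mul]
      _ ≤ ∑ c, hammingNorm (fun i => w (Sum.inl (i, c))) :=
          Finset.sum_le_sum fun c _ => key c
      _ ≤ hammingNorm w := by
          rw [hammingNorm_eq_sum w, Fintype.sum_sum_type]
          have e : ∑ c : Fin nc, hammingNorm (fun i => w (Sum.inl (i, c)))
              = ∑ p : Fin n × Fin nc, if w (Sum.inl p) ≠ 0 then 1 else 0 := by
            rw [Fintype.sum_prod_type_right]
            exact Finset.sum_congr rfl fun c _ => by rw [hammingNorm_eq_sum]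
          rw [e]
          exact Nat.le_add_right _ _
  refine ⟨⟨w0, hw0mem⟩, ?_⟩
  simp only [minWt]
  apply le_antisymm
  · rw [← hw0wt]
    exact Nat.sInf_le ⟨w0, hw0mem, rfl⟩
  · refine le_csInf ⟨_, ⟨w0, hw0mem, rfl⟩⟩ ?_
    rintro m ⟨w, hw, rfl⟩
    exact hlb w hw
end

section
/- Let (H_X, H_Z) be a CSS code that has at least one X logical operator, with X distance d_X, and let H_C ∈ F₂^{(n_c−k_c) × n_c} be a classical parity check matrix of full row rank with ker(H_C) ≠ {0}; let d_c be the minimum Hamming weight of a nonzero element of ker(H_C). Let H'_X, H'_Z be the check matrices of the generalized thickened code. Then every x ∈ ker(H'_Z) \ rowspan(H'_X) satisfies |supp(x_A)| ≥ d_X · d_c, |x_A|_C ≥ d_c, and |x_A|_R ≥ d_X. -/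
/-!
Write `x = (x_A, x_B)`. The Z checks of the thickened code say that every column of `x_A`
lies in `ker H_Z` and that `x_A H_Cᵀ = H_Xᵀ x_B`. If every column of `x_A` were in
`rowspan(H_X)`, say `x_A = H_Xᵀ N`, then for a right inverse `P` of `H_C` (which exists since
`H_C` has full row rank) `x` would be the combination of rows of `H'_X` with coefficient matrix
`N + (x_B - N H_Cᵀ) Pᵀ`. So some column of `x_A` lies outside `rowspan(H_X)`, and some
`w ∈ ker H_X` pairs nontrivially with it. Then `u = wᵀ x_A` is a nonzero codeword of `ker H_C`,
and every column `c` with `u_c ≠ 0` is an X logical of the base code, since `w` is orthogonal to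
`rowspan(H_X)`. Hence `x_A` has at least `wt(u) ≥ d_c` nonzero columns, each of weight
at least `d_X`.
-/

open Matrix

/-- Number of nonzero columns of the region-A part of a vector on the thickened qubits. -/
noncomputable def colWtA {n nc nX r : ℕ}
    (w : ((Fin n × Fin nc) ⊕ (Fin nX × Fin r)) → ZMod 2) : ℕ :=
  (Finset.univ.filter fun c : Fin nc => ∃ i : Fin n, w (Sum.inl (i, c)) ≠ 0).card

/-- Number of nonzero rows of the region-A part of a vector on the thickened qubits. -/
noncomputable def rowWtA {n nc nX r : ℕ}
    (w : ((Fin n × Fin nc) ⊕ (Fin nX × Fin r)) → ZMod 2) : ℕ :=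
  (Finset.univ.filter fun i : Fin n => ∃ c : Fin nc, w (Sum.inl (i, c)) ≠ 0).card

/-- Number of nonzero entries of the region-A part of a vector on the thickened qubits. -/
noncomputable def suppACard {n nc nX r : ℕ}
    (w : ((Fin n × Fin nc) ⊕ (Fin nX × Fin r)) → ZMod 2) : ℕ :=
  (Finset.univ.filter fun p : Fin n × Fin nc => w (Sum.inl p) ≠ 0).card

namespace Matrix

theorem mem_span_rows_iff {ι κ R : Type*} [Fintype ι] [CommSemiring R] (M : Matrix ι κ R)
    {v : κ → R} : v ∈ Submodule.span R (Set.range M.row) ↔ ∃ w, w ᵥ* M = v := by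
  rw [← range_vecMulLinear]
  rfl

theorem dotProduct_eq_zero_of_mem_span_rows {ι κ R : Type*} [Fintype ι] [Fintype κ]
    [CommSemiring R] {M : Matrix ι κ R} {w v : κ → R} (hw : M *ᵥ w = 0)
    (hv : v ∈ Submodule.span R (Set.range M.row)) : w ⬝ᵥ v = 0 := by
  obtain ⟨u, rfl⟩ := (mem_span_rows_iff M).1 hv
  rw [dotProduct_comm, ← dotProduct_mulVec, hw, dotProduct_zero]

theorem exists_mulVec_eq_zero_dotProduct_ne_zero {ι κ K : Type*} [Fintype κ] [DecidableEq κ]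
    [Field K] {M : Matrix ι κ K} {v : κ → K} (hv : v ∉ Submodule.span K (Set.range M.row)) :
    ∃ w, M *ᵥ w = 0 ∧ w ⬝ᵥ v ≠ 0 := by
  obtain ⟨f, hfv, hspan⟩ := Submodule.exists_le_ker_of_notMem hv
  obtain ⟨w, rfl⟩ := (dotProductEquiv K κ).surjective f
  refine ⟨w, funext fun i => ?_, hfv⟩
  rw [mulVec, dotProduct_comm]
  exact hspan (Submodule.subset_span ⟨i, rfl⟩)

theorem exists_eq_mul_of_forall_mem_span_rows {ι κ μ R : Type*} [Fintype ι] [CommSemiring R]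
    (A : Matrix μ κ R) (X : Matrix ι κ R) (hA : ∀ i, A i ∈ Submodule.span R (Set.range X.row)) :
    ∃ W : Matrix μ ι R, A = W * X := by
  choose W hW using fun i => (mem_span_rows_iff X).1 (hA i)
  exact ⟨of W, ext fun i k => by rw [← hW i]; rfl⟩

theorem exists_mul_eq_one_of_linearIndependent_row_s14 {ι κ K : Type*} [Fintype ι] [Fintype κ]
    [DecidableEq ι] [DecidableEq κ] [Field K] {M : Matrix ι κ K} (hM : LinearIndependent K M.row) :
    ∃ P : Matrix κ ι K, M * P = 1 := by
  have hinj : LinearMap.ker Mᵀ.mulVecLin = ⊥ := by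
    rw [LinearMap.ker_eq_bot, mulVecLin_transpose]
    exact vecMul_injective_iff.2 hM
  obtain ⟨g, hg⟩ := Mᵀ.mulVecLin.exists_leftInverse_of_injective hinj
  have hleft : LinearMap.toMatrix' g * Mᵀ = 1 := by
    rw [← LinearMap.toMatrix'_toLin' Mᵀ, ← LinearMap.toMatrix'_comp, toLin'_apply', hg,
      LinearMap.toMatrix'_id]
  refine ⟨(LinearMap.toMatrix' g)ᵀ, ?_⟩
  rw [← transpose_transpose M, ← transpose_mul, hleft, transpose_one]

theorem exists_eq_transpose_mul_and_eq_mul_transpose {μ ν ρ σ R : Type*} [Fintype μ]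
    [Fintype ρ] [DecidableEq ρ] [Fintype σ] [CommRing R] {X : Matrix μ ν R}
    {C : Matrix ρ σ R} {P : Matrix σ ρ R} (hP : C * P = 1) {A : Matrix ν σ R}
    {B : Matrix μ ρ R} {N : Matrix μ σ R} (hA : A = Xᵀ * N) (hAB : A * Cᵀ = Xᵀ * B) :
    ∃ M : Matrix μ σ R, A = Xᵀ * M ∧ B = M * Cᵀ := by
  refine ⟨N + (B - N * Cᵀ) * Pᵀ, ?_, ?_⟩
  · rw [Matrix.mul_add, ← Matrix.mul_assoc, Matrix.mul_sub, ← Matrix.mul_assoc, ← hA, ← hAB,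
      sub_self, Matrix.zero_mul, add_zero]
  · rw [Matrix.add_mul, Matrix.mul_assoc, ← transpose_mul, hP, transpose_one, Matrix.mul_one,
      add_sub_cancel]

theorem mulVec_vecMul_eq_zero_of_mul_transpose_eq {μ ν ρ σ R : Type*} [Fintype μ] [Fintype ν]
    [Fintype σ] [CommSemiring R] {X : Matrix μ ν R} {C : Matrix ρ σ R} {A : Matrix ν σ R}
    {B : Matrix μ ρ R} (hAB : A * Cᵀ = Xᵀ * B) {w : ν → R} (hw : X *ᵥ w = 0) :
    C *ᵥ (w ᵥ* A) = 0 :=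
  calc C *ᵥ (w ᵥ* A) = (A * Cᵀ)ᵀ *ᵥ w := by
        rw [transpose_mul, transpose_transpose, ← mulVec_mulVec, mulVec_transpose]
    _ = Bᵀ *ᵥ (X *ᵥ w) := by rw [hAB, transpose_mul, transpose_transpose, mulVec_mulVec]
    _ = 0 := by rw [hw, mulVec_zero]

end Matrix

section HammingWeight

open Finset

variable {ι κ R : Type*} [Zero R] (f : ι × κ → R)

theorem card_support_eq_sum_hammingNorm [Fintype ι] [Fintype κ] [DecidableEq R] :
    #{p | f p ≠ 0} = ∑ c, hammingNorm fun i => f (i, c) := by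
  simp only [hammingNorm, card_filter, Fintype.sum_prod_type]
  exact sum_comm

theorem mul_hammingNorm_le_card_support [Fintype ι] [Fintype κ] [DecidableEq R] {S : Type*}
    [Zero S] [DecidableEq S] {u : κ → S} {d : ℕ}
    (hd : ∀ c, u c ≠ 0 → d ≤ hammingNorm fun i => f (i, c)) :
    d * hammingNorm u ≤ #{p | f p ≠ 0} :=
  calc d * hammingNorm u = ∑ c with u c ≠ 0, d := by
        rw [sum_const, smul_eq_mul, mul_comm]; rfl
    _ ≤ ∑ c with u c ≠ 0, hammingNorm fun i => f (i, c) :=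
        sum_le_sum fun c hc => hd c (mem_filter.1 hc).2
    _ ≤ ∑ c, hammingNorm fun i => f (i, c) := sum_le_sum_of_subset (subset_univ _)
    _ = #{p | f p ≠ 0} := (card_support_eq_sum_hammingNorm f).symm

theorem hammingNorm_le_card_nonzero_cols [Fintype κ] [DecidablePred fun c => ∃ i, f (i, c) ≠ 0]
    {S : Type*} [Zero S] [DecidableEq S] {u : κ → S}
    (hu : ∀ c, u c ≠ 0 → (fun i => f (i, c)) ≠ 0) : hammingNorm u ≤ #{c | ∃ i, f (i, c) ≠ 0} :=
  card_le_card fun c hc => by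
    simp only [mem_filter, mem_univ, true_and] at hc ⊢
    exact Function.ne_iff.1 (hu c hc)

theorem hammingNorm_col_le_card_nonzero_rows [Fintype ι] [DecidableEq R]
    [DecidablePred fun i => ∃ c, f (i, c) ≠ 0] (c : κ) :
    (hammingNorm fun i => f (i, c)) ≤ #{i | ∃ c, f (i, c) ≠ 0} :=
  card_le_card fun i hi => by
    simp only [mem_filter, mem_univ, true_and] at hi ⊢
    exact ⟨c, hi⟩

end HammingWeight

theorem ne_zero_of_mem_logicalSet {ι₁ ι₂ κ : Type*} [Fintype ι₁] [Fintype ι₂] [Fintype κ]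
    {Hker : Matrix ι₁ κ (ZMod 2)} {Hspan : Matrix ι₂ κ (ZMod 2)} {v : κ → ZMod 2}
    (hv : v ∈ logicalSet Hker Hspan) : v ≠ 0 := by
  rintro rfl
  exact hv.2 (zero_mem _)

section Thickening

variable {α β γ δ R : Type*}

def regionA (x : (α × β) ⊕ (γ × δ) → R) : Matrix α β R :=
  of fun i c => x (.inl (i, c))

def regionB (x : (α × β) ⊕ (γ × δ) → R) : Matrix γ δ R :=
  of fun y j => x (.inr (y, j))

variable {nX nZ n r nc : ℕ} {HX : Matrix (Fin nX) (Fin n) (ZMod 2)}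
  {HZ : Matrix (Fin nZ) (Fin n) (ZMod 2)} {HC : Matrix (Fin r) (Fin nc) (ZMod 2)}
  {x : (Fin n × Fin nc) ⊕ (Fin nX × Fin r) → ZMod 2}

theorem thickZ_mulVec_inl (z : Fin nZ) (c : Fin nc) :
    (thickZ HX HZ HC *ᵥ x) (.inl (z, c)) = (HZ * regionA x) z c := by
  simp [mulVec, dotProduct, thickZ, regionA, mul_apply, Fintype.sum_sum_type,
    Fintype.sum_prod_type, ite_mul]

theorem thickZ_mulVec_inr (i : Fin n) (j : Fin r) :
    (thickZ HX HZ HC *ᵥ x) (.inr (i, j)) = (regionA x * HCᵀ + HXᵀ * regionB x) i j := by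
  simp [mulVec, dotProduct, thickZ, regionA, regionB, mul_apply, Fintype.sum_sum_type,
    Fintype.sum_prod_type, ite_mul, mul_comm]

theorem thickZ_mulVec_eq_zero_iff :
    thickZ HX HZ HC *ᵥ x = 0 ↔ HZ * regionA x = 0 ∧ regionA x * HCᵀ = HXᵀ * regionB x := by
  rw [funext_iff, Sum.forall, ← Matrix.ext_iff, ← Matrix.ext_iff]
  simp only [Prod.forall, thickZ_mulVec_inl, thickZ_mulVec_inr, Pi.zero_apply,
    Matrix.zero_apply, Matrix.add_apply, CharTwo.add_eq_zero]

theorem mem_rowSpan_thickX {W : Matrix (Fin nX) (Fin nc) (ZMod 2)}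
    (hA : regionA x = HXᵀ * W) (hB : regionB x = W * HCᵀ) : x ∈ rowSpan (thickX HX HC) := by
  refine (mem_span_rows_iff _).2 ⟨fun s => W s.1 s.2, funext fun p => ?_⟩
  rcases p with ⟨i, c⟩ | ⟨y, j⟩
  · change _ = regionA x i c
    rw [hA]
    simp [vecMul, dotProduct, mul_apply, Fintype.sum_prod_type, mul_comm]
  · change _ = regionB x y j
    rw [hB]
    simp [vecMul, dotProduct, mul_apply, Fintype.sum_prod_type, mul_comm]

theorem exists_col_regionA_notMem_rowSpan {P : Matrix (Fin nc) (Fin r) (ZMod 2)}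
    (hP : HC * P = 1) (hAB : regionA x * HCᵀ = HXᵀ * regionB x)
    (hx : x ∉ rowSpan (thickX HX HC)) : ∃ c, (regionA x).col c ∉ rowSpan HX := by
  by_contra! hcols
  obtain ⟨W, hW⟩ := exists_eq_mul_of_forall_mem_span_rows (regionA x)ᵀ HX hcols
  obtain ⟨M, hA, hB⟩ := exists_eq_transpose_mul_and_eq_mul_transpose hP (N := Wᵀ)
    (by rw [← transpose_transpose (regionA x), hW, transpose_mul]) hAB
  exact hx (mem_rowSpan_thickX hA hB)

theorem exists_codeword_with_logical_cols {P : Matrix (Fin nc) (Fin r) (ZMod 2)}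
    (hP : HC * P = 1) (hx : x ∈ logicalSet (thickZ HX HZ HC) (thickX HX HC)) :
    ∃ u, HC *ᵥ u = 0 ∧ u ≠ 0 ∧
      ∀ c, u c ≠ 0 → (fun i => x (.inl (i, c))) ∈ logicalSet HZ HX := by
  obtain ⟨hZ, hAB⟩ := thickZ_mulVec_eq_zero_iff.1 hx.1
  obtain ⟨c₀, hc₀⟩ := exists_col_regionA_notMem_rowSpan hP hAB hx.2
  obtain ⟨w, hw, hwc₀⟩ := exists_mulVec_eq_zero_dotProduct_ne_zero hc₀
  have hu : ∀ c, (w ᵥ* regionA x) c = w ⬝ᵥ (regionA x).col c := fun c => rfl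
  refine ⟨w ᵥ* regionA x, mulVec_vecMul_eq_zero_of_mul_transpose_eq hAB hw,
    fun h => hwc₀ (by rw [← hu, h, Pi.zero_apply]), fun c hc => ⟨?_, fun hmem => hc ?_⟩⟩
  · change HZ *ᵥ (regionA x).col c = 0
    rw [← mulVec_single_one, mulVec_mulVec, hZ, zero_mulVec]
  · exact (hu c).trans (dotProduct_eq_zero_of_mem_span_rows hw hmem)

end Thickening

theorem thickened_X_component_weight_general {nX nZ n r nc : ℕ}
    (HX : Matrix (Fin nX) (Fin n) (ZMod 2)) (HZ : Matrix (Fin nZ) (Fin n) (ZMod 2))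
    (HC : Matrix (Fin r) (Fin nc) (ZMod 2))
    (hrank : LinearIndependent (ZMod 2) (fun i : Fin r => HC i)) :
    ∀ x ∈ logicalSet (thickZ HX HZ HC) (thickX HX HC),
      minWt (logicalSet HZ HX) *
          sInf (hammingNorm '' {v : Fin nc → ZMod 2 | HC.mulVec v = 0 ∧ v ≠ 0}) ≤
        suppACard x ∧
      sInf (hammingNorm '' {v : Fin nc → ZMod 2 | HC.mulVec v = 0 ∧ v ≠ 0}) ≤ colWtA x ∧
      minWt (logicalSet HZ HX) ≤ rowWtA x := by
  intro x hx
  obtain ⟨P, hP⟩ := exists_mul_eq_one_of_linearIndependent_row_s14 hrank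
  obtain ⟨u, hu, hu0, hcols⟩ := exists_codeword_with_logical_cols hP hx
  obtain ⟨c₀, hc₀⟩ := Function.ne_iff.1 hu0
  have hdc : sInf (hammingNorm '' {v : Fin nc → ZMod 2 | HC *ᵥ v = 0 ∧ v ≠ 0}) ≤
      hammingNorm u := Nat.sInf_le ⟨u, ⟨hu, hu0⟩, rfl⟩
  have hdX : ∀ c, u c ≠ 0 → minWt (logicalSet HZ HX) ≤ hammingNorm fun i => x (.inl (i, c)) :=
    fun c hc => Nat.sInf_le ⟨_, hcols c hc, rfl⟩
  refine ⟨(Nat.mul_le_mul_left _ hdc).trans (mul_hammingNorm_le_card_support (x ∘ .inl) hdX),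
    hdc.trans (hammingNorm_le_card_nonzero_cols (x ∘ .inl) fun c hc => ?_),
    (hdX c₀ hc₀).trans (hammingNorm_col_le_card_nonzero_rows (x ∘ .inl) c₀)⟩
  exact ne_zero_of_mem_logicalSet (hcols c hc)

/-- **Component weight of X logicals of the thickened code:** every X logical operator
`x` of the thickened code has `|supp(x_A)| ≥ d_X·d_c`, `|x_A|_C ≥ d_c` and `|x_A|_R ≥ d_X`. -/
theorem thickened_X_component_weight {nX nZ n r nc : ℕ}
    (HX : Matrix (Fin nX) (Fin n) (ZMod 2)) (HZ : Matrix (Fin nZ) (Fin n) (ZMod 2))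
    (HC : Matrix (Fin r) (Fin nc) (ZMod 2))
    (hcss : HX * HZ.transpose = 0)
    (hrank : LinearIndependent (ZMod 2) (fun i : Fin r => HC i))
    (hkc : ∃ v : Fin nc → ZMod 2, HC.mulVec v = 0 ∧ v ≠ 0)
    (hlog : (logicalSet HZ HX).Nonempty) :
    ∀ x ∈ logicalSet (thickZ HX HZ HC) (thickX HX HC),
      minWt (logicalSet HZ HX) *
          sInf (hammingNorm '' {v : Fin nc → ZMod 2 | HC.mulVec v = 0 ∧ v ≠ 0}) ≤
        suppACard x ∧
      sInf (hammingNorm '' {v : Fin nc → ZMod 2 | HC.mulVec v = 0 ∧ v ≠ 0}) ≤ colWtA x ∧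
      minWt (logicalSet HZ HX) ≤ rowWtA x :=
  thickened_X_component_weight_general HX HZ HC hrank
end
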